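/- arXiv:2512.24817 — 2 statements merged into one kernel-verified Lean document; each statement's English description precedes it below -/
import Mathlib

section
/- Let p be an odd prime, k a positive integer, and ε a unit of ℤ/p^kℤ that is not a square. Let G = GL₂(ℤ/p^kℤ). Then S(C_ns(p^k)) = {0} ∪ {2p^{2j} : 0 ≤ j < k} ∪ {p^{2k} − p^{2k-1}}; that is, a natural number m satisfies #{g ∈ G : gRg⁻¹ ⊆ C_ns(p^k)} = m · #C_ns(p^k) for some subgroup R of G if and only if m lies in this set. -/
open Matrix

abbrev GL2 (N : ℕ) := GL (Fin 2) (ZMod N)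

/-- The Borel subgroup `B₀(N)` of upper-triangular matrices, as a set. -/
def B0 (N : ℕ) : Set (GL2 N) :=
  {g | (g : Matrix (Fin 2) (Fin 2) (ZMod N)) 1 0 = 0}

/-- The number of `g` with `g R g⁻¹ ⊆ H`. -/
noncomputable def conjCount {N : ℕ} (H : Set (GL2 N)) (R : Subgroup (GL2 N)) : ℕ :=
  Nat.card {g : GL2 N | ∀ r ∈ R, g * r * g⁻¹ ∈ H}

/-- `S(H)`: the set of `m` with `#{g : gRg⁻¹ ⊆ H} = m * #H` for some subgroup `R`. -/
def Sset {N : ℕ} (H : Set (GL2 N)) : Set ℕ :=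
  {m | ∃ R : Subgroup (GL2 N), conjCount H R = m * Nat.card H}
/-- The nonsplit Cartan subgroup attached to `ε`: all invertible matrices
`[[a, εb], [b, a]]`. -/
def Cns (N : ℕ) (ε : ZMod N) : Subgroup (GL2 N) where
  carrier := {g | (g : Matrix (Fin 2) (Fin 2) (ZMod N)) 1 1 =
                  (g : Matrix (Fin 2) (Fin 2) (ZMod N)) 0 0 ∧
                  (g : Matrix (Fin 2) (Fin 2) (ZMod N)) 0 1 =
                    ε * (g : Matrix (Fin 2) (Fin 2) (ZMod N)) 1 0}
  one_mem' := by constructor <;> simp [Matrix.one_apply]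
  mul_mem' := by
    rintro a b ⟨ha1, ha2⟩ ⟨hb1, hb2⟩
    constructor <;>
      · simp only [Units.val_mul, Matrix.mul_apply, Fin.sum_univ_two, ha1, ha2, hb1, hb2]
        ring
  inv_mem' := by
    rintro a ⟨h1, h2⟩
    have hcoe : ((a⁻¹ : GL2 N) : Matrix (Fin 2) (Fin 2) (ZMod N)) =
        ((a : Matrix (Fin 2) (Fin 2) (ZMod N)))⁻¹ := by
      rw [← Matrix.coe_units_inv]
    have hinv : ((a : Matrix (Fin 2) (Fin 2) (ZMod N)))⁻¹ =
        Ring.inverse (a : Matrix (Fin 2) (Fin 2) (ZMod N)).det •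
          (a : Matrix (Fin 2) (Fin 2) (ZMod N)).adjugate := Matrix.inv_def _
    constructor <;>
      · rw [hcoe, hinv, Matrix.adjugate_fin_two]
        simp only [Matrix.smul_apply, Matrix.cons_val', Matrix.cons_val_zero,
          Matrix.cons_val_one, Matrix.head_cons, Matrix.head_fin_const,
          Matrix.empty_val', Matrix.cons_val_fin_one, Matrix.of_apply, h1, h2,
          smul_eq_mul]
        try ring
section ZModFacts

variable {p : ℕ}

lemma zmod_self_eq_cast_val {n : ℕ} [NeZero n] (x : ZMod n) : x = ((x.val : ℕ) : ZMod n) := by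
  rw [ZMod.natCast_val, ZMod.cast_id]

lemma zmod_castHom_eq_cast_val {n m : ℕ} [NeZero n] (h : m ∣ n) (x : ZMod n) :
    ZMod.castHom h (ZMod m) x = ((x.val : ℕ) : ZMod m) := by
  rw [ZMod.castHom_apply, ← ZMod.natCast_val]

lemma isUnit_iff_cast_ne (hp : p.Prime) {a : ℕ} (ha : 0 < a) (x : ZMod (p^a)) :
    IsUnit x ↔ (ZMod.castHom (dvd_pow_self p ha.ne') (ZMod p) x) ≠ 0 := by
  haveI : NeZero (p^a) := ⟨pow_ne_zero a hp.ne_zero⟩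
  rw [zmod_castHom_eq_cast_val]
  conv_lhs => rw [zmod_self_eq_cast_val x]
  rw [ZMod.isUnit_iff_coprime, Nat.coprime_pow_right_iff ha]
  rw [Ne, ZMod.natCast_eq_zero_iff]
  rw [Nat.coprime_comm, hp.coprime_iff_not_dvd]

lemma nonunit_exists_factor (hp : p.Prime) {a : ℕ} (ha : 0 < a) (x : ZMod (p^a))
    (hx : ¬ IsUnit x) : ∃ y, x = (p : ZMod (p^a)) * y := by
  haveI : NeZero (p^a) := ⟨pow_ne_zero a hp.ne_zero⟩
  rw [isUnit_iff_cast_ne hp ha, not_not, zmod_castHom_eq_cast_val,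
    ZMod.natCast_eq_zero_iff] at hx
  obtain ⟨c, hc⟩ := hx
  exact ⟨(c : ZMod (p^a)), by rw [← Nat.cast_mul, ← hc, ← zmod_self_eq_cast_val]⟩

lemma isUnit_add_nonunit (hp : p.Prime) {a : ℕ} (ha : 0 < a) {x d : ZMod (p^a)}
    (hx : IsUnit x) (hd : ¬ IsUnit d) : IsUnit (x + d) := by
  rw [isUnit_iff_cast_ne hp ha] at hx ⊢
  rw [isUnit_iff_cast_ne hp ha, not_not] at hd
  rw [map_add, hd, add_zero]; exact hx

lemma isUnit_two (hp : p.Prime) (hodd : Odd p) {a : ℕ} (ha : 0 < a) :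
    IsUnit (2 : ZMod (p^a)) := by
  haveI : NeZero (p^a) := ⟨pow_ne_zero a hp.ne_zero⟩
  have : ((2 : ℕ) : ZMod (p^a)) = 2 := by norm_num
  rw [← this, ZMod.isUnit_iff_coprime, Nat.coprime_pow_right_iff ha,
    Nat.prime_two.coprime_iff_not_dvd]
  rw [Nat.odd_iff] at hodd
  omega

lemma sq_eq_one_cases (hp : p.Prime) (hodd : Odd p) {a : ℕ} (ha : 0 < a) (c : ZMod (p^a))
    (hc : c * c = 1) : c = 1 ∨ c = -1 := by
  have h2 : IsUnit (2 : ZMod (p^a)) := isUnit_two hp hodd ha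
  have hfac : (c - 1) * (c + 1) = 0 := by linear_combination hc
  by_cases h1 : IsUnit (c - 1)
  · right
    obtain ⟨u, hu⟩ := h1
    have : (↑u⁻¹ : ZMod (p^a)) * ((c-1) * (c+1)) = ↑u⁻¹ * 0 := by rw [hfac]
    rw [← hu, mul_zero, ← mul_assoc, Units.inv_mul, one_mul] at this
    linear_combination this
  · left
    have hu : IsUnit (c + 1) := by
      have h : c + 1 = 2 + (c - 1) := by ring
      rw [h]
      exact isUnit_add_nonunit hp ha h2 h1
    obtain ⟨u, hu⟩ := hu
    have : ((c-1) * (c+1)) * ↑u⁻¹ = 0 * ↑u⁻¹ := by rw [hfac]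
    rw [← hu, zero_mul, mul_assoc, Units.mul_inv, mul_one] at this
    linear_combination this

end ZModFacts

section B
variable {p : ℕ}
-- `castHom` to level `b` kills exactly the annihilator of `p^j` where `a = b + j`.
lemma cast_eq_zero_iff_ann (hp : p.Prime) {a b j : ℕ} (hab : a = b + j) (x : ZMod (p^a)) :
    ZMod.castHom (pow_dvd_pow p (by omega : b ≤ a)) (ZMod (p^b)) x = 0 ↔
      (p : ZMod (p^a))^j * x = 0 := by
  subst hab
  haveI : NeZero (p^(b+j)) := ⟨pow_ne_zero _ hp.ne_zero⟩
  rw [zmod_castHom_eq_cast_val, ZMod.natCast_eq_zero_iff]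
  have hx : (p : ZMod (p^(b+j)))^j * x = (((p^j * x.val : ℕ)) : ZMod (p^(b+j))) := by
    push_cast
    rw [← zmod_self_eq_cast_val]
  rw [hx, ZMod.natCast_eq_zero_iff]
  constructor
  · rintro ⟨c, hc⟩; exact ⟨c, by rw [hc, pow_add]; ring⟩
  · rintro ⟨c, hc⟩
    have hpj : 0 < p^j := pow_pos hp.pos _
    refine ⟨c, ?_⟩
    have : p^j * (p^b * c) = p^j * x.val := by rw [hc, pow_add]; ring
    exact (Nat.eq_of_mul_eq_mul_left hpj this).symm

-- the annihilator of `p^j` in `ZMod (p^a)` has `p^j` elements (for `j ≤ a`)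
def annEquiv (hp : p.Prime) {a b j : ℕ} (hab : a = b + j) :
    ZMod (p^j) ≃ {d : ZMod (p^a) // (p : ZMod (p^a))^j * d = 0} where
  toFun t := ⟨(p:ZMod (p^a))^b * ((t.val : ℕ) : ZMod (p^a)), by
    rw [← mul_assoc, ← pow_add, show j + b = a by omega, ← Nat.cast_pow,
      ZMod.natCast_self, zero_mul]⟩
  invFun d := ((d.val.val / p^b : ℕ) : ZMod (p^j))
  left_inv t := by
    dsimp only
    haveI : NeZero (p^a) := ⟨pow_ne_zero a hp.ne_zero⟩
    haveI : NeZero (p^j) := ⟨pow_ne_zero j hp.ne_zero⟩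
    have htv : t.val < p^j := ZMod.val_lt t
    have h1 : ((p:ZMod (p^a))^b * ((t.val : ℕ) : ZMod (p^a))) = (((p^b * t.val : ℕ)) : ZMod (p^a)) := by
      push_cast; ring
    rw [h1]
    have h2 : (((p^b * t.val : ℕ)) : ZMod (p^a)).val = p^b * t.val := by
      apply ZMod.val_natCast_of_lt
      rw [hab, pow_add]
      exact (Nat.mul_lt_mul_left (pow_pos hp.pos b)).mpr htv
    rw [h2, Nat.mul_div_cancel_left _ (pow_pos hp.pos b), ZMod.natCast_val, ZMod.cast_id]
  right_inv d := by
    dsimp only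
    haveI : NeZero (p^a) := ⟨pow_ne_zero a hp.ne_zero⟩
    haveI : NeZero (p^j) := ⟨pow_ne_zero j hp.ne_zero⟩
    obtain ⟨d, hd⟩ := d
    simp only [Subtype.mk.injEq]
    have hdvd : p^b ∣ d.val := by
      have := (cast_eq_zero_iff_ann hp hab d).mpr hd
      rwa [zmod_castHom_eq_cast_val, ZMod.natCast_eq_zero_iff] at this
    obtain ⟨c, hc⟩ := hdvd
    have hclt : c < p^j := by
      have : d.val < p^a := ZMod.val_lt d
      rw [hc, hab, pow_add] at this
      exact Nat.lt_of_mul_lt_mul_left this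
    have h3 : d.val / p^b = c := by rw [hc, Nat.mul_div_cancel_left _ (pow_pos hp.pos b)]
    rw [h3]
    have h4 : (((c : ℕ) : ZMod (p^j)).val : ℕ) = c := ZMod.val_natCast_of_lt hclt
    rw [h4]
    calc (p:ZMod (p^a))^b * (c : ZMod (p^a)) = ((p^b * c : ℕ) : ZMod (p^a)) := by push_cast; ring
    _ = d := by rw [← hc, ← zmod_self_eq_cast_val]

lemma card_ann (hp : p.Prime) {a b j : ℕ} (hab : a = b + j) :
    Nat.card {d : ZMod (p^a) // (p : ZMod (p^a))^j * d = 0} = p^j := by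
  haveI : NeZero (p^j) := ⟨pow_ne_zero j hp.ne_zero⟩
  rw [← Nat.card_congr (annEquiv hp hab), Nat.card_eq_fintype_card, ZMod.card]
end B

section C
variable {p : ℕ}

lemma cast_zero_factor (hp : p.Prime) {a b : ℕ} (hba : b ≤ a) (z : ZMod (p^a))
    (hz : ZMod.castHom (pow_dvd_pow p hba) (ZMod (p^b)) z = 0) :
    ∃ s, z = (p : ZMod (p^a))^b * s := by
  haveI : NeZero (p^a) := ⟨pow_ne_zero a hp.ne_zero⟩
  rw [zmod_castHom_eq_cast_val, ZMod.natCast_eq_zero_iff] at hz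
  obtain ⟨c, hc⟩ := hz
  refine ⟨(c : ZMod (p^a)), ?_⟩
  calc z = ((z.val : ℕ) : ZMod (p^a)) := zmod_self_eq_cast_val z
  _ = (p : ZMod (p^a))^b * (c : ZMod (p^a)) := by rw [hc]; push_cast; ring

lemma cast1_unit_of_unit (hp : p.Prime) {a : ℕ} (ha : 0 < a) {x : ZMod (p^a)}
    (hx : IsUnit x) : ZMod.castHom (dvd_pow_self p ha.ne') (ZMod p) x ≠ 0 :=
  (isUnit_iff_cast_ne hp ha x).mp hx

lemma exists_sq_lift (hp : p.Prime) (hodd : Odd p) {a : ℕ} (ha : 0 < a)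
    (u : ZMod (p^a)) (hu : IsUnit u)
    (h : ∃ y : ZMod p, y * y = ZMod.castHom (dvd_pow_self p ha.ne') (ZMod p) u) :
    ∃ y : ZMod (p^a), y * y = u := by
  haveI : NeZero p := ⟨hp.ne_zero⟩
  induction a with
  | zero => omega
  | succ n ih =>
    rcases Nat.eq_zero_or_pos n with rfl | hn
    · -- base case : a = 1
      obtain ⟨y, hy⟩ := h
      haveI : NeZero (p^1) := ⟨pow_ne_zero 1 hp.ne_zero⟩
      refine ⟨((y.val : ℕ) : ZMod (p^1)), ?_⟩
      have hinj : ∀ z w : ZMod (p^1),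
          ZMod.castHom (dvd_pow_self p ha.ne') (ZMod p) z
            = ZMod.castHom (dvd_pow_self p ha.ne') (ZMod p) w → z = w := by
        intro z w hzw
        rw [zmod_castHom_eq_cast_val, zmod_castHom_eq_cast_val] at hzw
        have hzv : z.val < p := lt_of_lt_of_eq (ZMod.val_lt z) (pow_one p)
        have hwv : w.val < p := lt_of_lt_of_eq (ZMod.val_lt w) (pow_one p)
        have hval : z.val = w.val := by
          have := congrArg ZMod.val hzw
          rwa [ZMod.val_cast_of_lt hzv, ZMod.val_cast_of_lt hwv] at this
        rw [zmod_self_eq_cast_val z, zmod_self_eq_cast_val w, hval]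
      apply hinj
      rw [_root_.map_mul]
      have hcv : (ZMod.castHom (dvd_pow_self p ha.ne') (ZMod p))
          ((y.val : ℕ) : ZMod (p^1)) = y := by
        rw [map_natCast, ZMod.natCast_val, ZMod.cast_id]
      rw [hcv]
      exact hy
    · -- inductive step, n ≥ 1
      haveI : NeZero (p^(n+1)) := ⟨pow_ne_zero _ hp.ne_zero⟩
      haveI : NeZero (p^n) := ⟨pow_ne_zero _ hp.ne_zero⟩
      set φ := ZMod.castHom (pow_dvd_pow p (by omega : n ≤ n+1)) (ZMod (p^n)) with hφ
      have hcomp : ∀ z : ZMod (p^(n+1)),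
          ZMod.castHom (dvd_pow_self p hn.ne') (ZMod p) (φ z)
            = ZMod.castHom (dvd_pow_self p ha.ne') (ZMod p) z := by
        intro z
        rw [hφ, ← RingHom.comp_apply, ZMod.castHom_comp]
      have hu' : IsUnit (φ u) := hu.map φ
      have h' : ∃ y : ZMod p, y * y
          = ZMod.castHom (dvd_pow_self p hn.ne') (ZMod p) (φ u) := by
        obtain ⟨y, hy⟩ := h
        exact ⟨y, by rw [hcomp]; exact hy⟩
      obtain ⟨y, hy⟩ := ih hn (φ u) hu' h'
      -- lift y
      set Y : ZMod (p^(n+1)) := ((y.val : ℕ) : ZMod (p^(n+1))) with hY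
      have hφY : φ Y = y := by
        rw [hY, map_natCast, ZMod.natCast_val, ZMod.cast_id]
      have hker : φ (Y * Y - u) = 0 := by
        rw [_root_.map_sub, _root_.map_mul, hφY, hy, sub_self]
      obtain ⟨s, hs⟩ := cast_zero_factor hp (by omega : n ≤ n+1) _ hker
      have hYu : IsUnit Y := by
        rw [isUnit_iff_cast_ne hp ha]
        rw [← hcomp, hφY]
        have : IsUnit y := isUnit_of_mul_isUnit_left (hy ▸ hu')
        exact cast1_unit_of_unit hp hn this
      have h2Y : IsUnit (2 * Y) := (isUnit_two hp hodd ha).mul hYu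
      set W := h2Y.unit with hW
      have hw : (2 * Y) * (↑W⁻¹ : ZMod (p^(n+1))) = 1 := by
        have hw0 : (↑W : ZMod (p^(n+1))) * ↑W⁻¹ = 1 := W.mul_inv
        rwa [hW, IsUnit.unit_spec] at hw0
      have hpp : (p : ZMod (p^(n+1)))^n * (p : ZMod (p^(n+1)))^n = 0 := by
        rw [← pow_add]
        have : ((p^(n+n) : ℕ) : ZMod (p^(n+1))) = 0 := by
          rw [ZMod.natCast_eq_zero_iff]
          exact pow_dvd_pow p (by omega)
        rw [← this]; push_cast; ring
      refine ⟨Y - (p : ZMod (p^(n+1)))^n * (s * ↑W⁻¹), ?_⟩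
      have hYY : Y * Y - u = (p : ZMod (p^(n+1)))^n * s := hs
      linear_combination hYY - ((p: ZMod (p^(n+1)))^n * s) * hw
        + (s^2 * (↑W⁻¹:ZMod (p^(n+1)))^2) * hpp

lemma nonsq_all_levels {k : ℕ} (hp : p.Prime) (hodd : Odd p) (hk : 0 < k)
    {b : ℕ} (hb : 0 < b) (hbk : b ≤ k) (ε : ZMod (p^k)) (hε : IsUnit ε)
    (hsq : ¬∃ x : ZMod (p^k), x^2 = ε) (y : ZMod (p^b)) :
    y * y ≠ ZMod.castHom (pow_dvd_pow p hbk) (ZMod (p^b)) ε := by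
  intro hy
  apply hsq
  have h1 : (ZMod.castHom (dvd_pow_self p hb.ne') (ZMod p) y)
      * (ZMod.castHom (dvd_pow_self p hb.ne') (ZMod p) y)
      = ZMod.castHom (dvd_pow_self p hk.ne') (ZMod p) ε := by
    rw [← _root_.map_mul, hy, ← RingHom.comp_apply, ZMod.castHom_comp]
  obtain ⟨z, hz⟩ := exists_sq_lift hp hodd hk ε hε ⟨_, h1⟩
  exact ⟨z, by rw [pow_two, hz]⟩

end C
section D
variable {p : ℕ}

lemma cast1_eq_zero_iff (hp : p.Prime) {a j : ℕ} (haj : a = 1 + j) (x : ZMod (p^a)) :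
    ZMod.castHom (dvd_pow_self p (by omega : a ≠ 0)) (ZMod p) x = 0 ↔
      (p : ZMod (p^a))^j * x = 0 := by
  subst haj
  haveI : NeZero (p^(1+j)) := ⟨pow_ne_zero _ hp.ne_zero⟩
  rw [zmod_castHom_eq_cast_val, ZMod.natCast_eq_zero_iff]
  have hx : (p : ZMod (p^(1+j)))^j * x = (((p^j * x.val : ℕ)) : ZMod (p^(1+j))) := by
    push_cast
    rw [← zmod_self_eq_cast_val]
  rw [hx, ZMod.natCast_eq_zero_iff]
  constructor
  · rintro ⟨c, hc⟩; exact ⟨c, by rw [hc, pow_add]; ring⟩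
  · rintro ⟨c, hc⟩
    refine ⟨c, ?_⟩
    have h2 : p^j * (p * c) = p^j * x.val := by rw [hc, pow_add]; ring
    exact (Nat.eq_of_mul_eq_mul_left (pow_pos hp.pos _) h2).symm

lemma card_ker_cast1 (hp : p.Prime) {a : ℕ} (ha : 0 < a) :
    Nat.card {x : ZMod (p^a) // ZMod.castHom (dvd_pow_self p ha.ne') (ZMod p) x = 0}
      = p^(a-1) := by
  rw [Nat.card_congr (Equiv.subtypeEquivRight
    (fun x => cast1_eq_zero_iff hp (by omega : a = 1 + (a-1)) x))]
  exact card_ann hp (by omega : a = 1 + (a-1))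

def fiberEquiv (hp : p.Prime) {a : ℕ} (ha : 0 < a) {ι : Type} (P : (ι → ZMod p) → Prop) :
    {v : ι → ZMod (p^a) //
        P (fun i => ZMod.castHom (dvd_pow_self p ha.ne') (ZMod p) (v i))} ≃
      ({w : ι → ZMod p // P w} ×
        (ι → {x : ZMod (p^a) // ZMod.castHom (dvd_pow_self p ha.ne') (ZMod p) x = 0})) where
  toFun v := (⟨fun i => ZMod.castHom (dvd_pow_self p ha.ne') (ZMod p) (v.1 i), v.2⟩,
    fun i => ⟨v.1 i - (((ZMod.castHom (dvd_pow_self p ha.ne') (ZMod p) (v.1 i)).val : ℕ)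
        : ZMod (p^a)), by
      haveI : NeZero p := ⟨hp.ne_zero⟩
      rw [_root_.map_sub, map_natCast, ZMod.natCast_val, ZMod.cast_id, sub_self]⟩)
  invFun we := ⟨fun i => (((we.1.1 i).val : ℕ) : ZMod (p^a)) + (we.2 i).1, by
    haveI : NeZero p := ⟨hp.ne_zero⟩
    have h : (fun i => ZMod.castHom (dvd_pow_self p ha.ne') (ZMod p)
        ((((we.1.1 i).val : ℕ) : ZMod (p^a)) + (we.2 i).1)) = we.1.1 := by
      funext i
      rw [_root_.map_add, (we.2 i).2, add_zero, map_natCast, ZMod.natCast_val, ZMod.cast_id]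
    rw [h]
    exact we.1.2⟩
  left_inv v := by
    apply Subtype.ext
    funext i
    exact add_sub_cancel _ _
  right_inv we := by
    haveI : NeZero p := ⟨hp.ne_zero⟩
    have hc : ∀ i, ZMod.castHom (dvd_pow_self p ha.ne') (ZMod p)
        ((((we.1.1 i).val : ℕ) : ZMod (p^a)) + (we.2 i).1) = we.1.1 i := by
      intro i
      rw [_root_.map_add, (we.2 i).2, add_zero, map_natCast, ZMod.natCast_val, ZMod.cast_id]
    refine Prod.ext (Subtype.ext (funext fun i => hc i)) (funext fun i => Subtype.ext ?_)
    show (((we.1.1 i).val : ℕ) : ZMod (p^a)) + (we.2 i).1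
      - (((ZMod.castHom (dvd_pow_self p ha.ne') (ZMod p)
          ((((we.1.1 i).val : ℕ) : ZMod (p^a)) + (we.2 i).1)).val : ℕ) : ZMod (p^a))
      = (we.2 i).1
    rw [hc i, add_sub_cancel_left]

end D
section E
variable {p : ℕ}

lemma card_fiber (hp : p.Prime) {a : ℕ} (ha : 0 < a) {ι : Type} [Fintype ι]
    (P : (ι → ZMod p) → Prop) :
    Nat.card {v : ι → ZMod (p^a) //
        P (fun i => ZMod.castHom (dvd_pow_self p ha.ne') (ZMod p) (v i))}
      = Nat.card {w : ι → ZMod p // P w} * (p^(a-1))^(Fintype.card ι) := by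
  rw [Nat.card_congr (fiberEquiv hp ha P), Nat.card_prod, Nat.card_pi]
  rw [Finset.prod_const, card_ker_cast1 hp ha, Finset.card_univ]

def matrixSubtypeEquiv {α : Type} (Q : Matrix (Fin 2) (Fin 2) α → Prop) :
    {M : Matrix (Fin 2) (Fin 2) α // Q M} ≃
      {v : Fin 2 × Fin 2 → α // Q (Matrix.of fun i j => v (i,j))} where
  toFun M := ⟨fun x => M.1 x.1 x.2, M.2⟩
  invFun v := ⟨Matrix.of fun i j => v.1 (i,j), v.2⟩
  left_inv M := rfl
  right_inv v := rfl

lemma det_unit_iff_cast (hp : p.Prime) {a : ℕ} (ha : 0 < a)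
    (M : Matrix (Fin 2) (Fin 2) (ZMod (p^a))) :
    IsUnit M.det ↔
      (Matrix.of fun i j => ZMod.castHom (dvd_pow_self p ha.ne') (ZMod p) (M i j)).det ≠ 0 := by
  haveI : Fact p.Prime := ⟨hp⟩
  rw [isUnit_iff_cast_ne hp ha, RingHom.map_det]
  rfl

-- the number of invertible matrices at level a
lemma card_GL_subtype (hp : p.Prime) {a : ℕ} (ha : 0 < a) :
    Nat.card {M : Matrix (Fin 2) (Fin 2) (ZMod (p^a)) // IsUnit M.det}
      = ((p^2 - 1) * (p^2 - p)) * (p^(a-1))^4 := by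
  haveI : Fact p.Prime := ⟨hp⟩
  set c1 := ZMod.castHom (dvd_pow_self p ha.ne') (ZMod p) with hc1
  set P : (Fin 2 × Fin 2 → ZMod p) → Prop :=
    fun w => (Matrix.of fun i j => w (i,j)).det ≠ 0 with hP
  have e1 : {M : Matrix (Fin 2) (Fin 2) (ZMod (p^a)) // IsUnit M.det} ≃
      {v : Fin 2 × Fin 2 → ZMod (p^a) // P (fun x => c1 (v x))} := by
    refine (matrixSubtypeEquiv _).trans (Equiv.subtypeEquivRight fun v => ?_)
    rw [hP]
    exact det_unit_iff_cast hp ha _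
  rw [Nat.card_congr e1, card_fiber hp ha P]
  have e2 : {w : Fin 2 × Fin 2 → ZMod p // P w} ≃ GL (Fin 2) (ZMod p) := by
    refine ((matrixSubtypeEquiv (fun M => IsUnit M.det)).trans
      (Equiv.subtypeEquivRight fun v => ?_)).symm.trans ?_
    · rw [hP, isUnit_iff_ne_zero]
    · exact {
        toFun := fun M => ((Matrix.isUnit_iff_isUnit_det _).mpr M.2).unit
        invFun := fun g => ⟨g.val, (Matrix.isUnit_iff_isUnit_det _).mp g.isUnit⟩
        left_inv := fun M => Subtype.ext (((Matrix.isUnit_iff_isUnit_det _).mpr M.2).unit_spec)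
        right_inv := fun g => Units.ext
          (((Matrix.isUnit_iff_isUnit_det _).mpr
            ((Matrix.isUnit_iff_isUnit_det _).mp g.isUnit)).unit_spec) }
  rw [Nat.card_congr e2, Matrix.card_GL_field]
  have : Fintype.card (ZMod p) = p := ZMod.card p
  rw [Fin.prod_univ_two, this]
  simp only [Fintype.card_prod, Fintype.card_fin, pow_one, Fin.isValue]
  norm_num

-- GL2 group ≃ matrix subtype
noncomputable def glEquivSubtype {α : Type} [CommRing α] :
    GL (Fin 2) α ≃ {M : Matrix (Fin 2) (Fin 2) α // IsUnit M.det} where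
  toFun g := ⟨g.val, (Matrix.isUnit_iff_isUnit_det _).mp g.isUnit⟩
  invFun M := ((Matrix.isUnit_iff_isUnit_det _).mpr M.2).unit
  left_inv g := Units.ext
    (((Matrix.isUnit_iff_isUnit_det _).mpr
      ((Matrix.isUnit_iff_isUnit_det _).mp g.isUnit)).unit_spec)
  right_inv M := Subtype.ext (((Matrix.isUnit_iff_isUnit_det _).mpr M.2).unit_spec)

-- pairs count
lemma card_pairs (hp : p.Prime) {a : ℕ} (ha : 0 < a) (ε : ZMod (p^a))
    (hsqa : ∀ y : ZMod p, y * y ≠ ZMod.castHom (dvd_pow_self p ha.ne') (ZMod p) ε) :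
    Nat.card {v : Fin 2 → ZMod (p^a) // IsUnit (v 0 * v 0 - ε * (v 1 * v 1))}
      = (p^2 - 1) * (p^(a-1))^2 := by
  haveI : Fact p.Prime := ⟨hp⟩
  set c1 := ZMod.castHom (dvd_pow_self p ha.ne') (ZMod p) with hc1
  set P : (Fin 2 → ZMod p) → Prop :=
    fun w => w 0 * w 0 - c1 ε * (w 1 * w 1) ≠ 0 with hP
  have e1 : {v : Fin 2 → ZMod (p^a) // IsUnit (v 0 * v 0 - ε * (v 1 * v 1))} ≃
      {v : Fin 2 → ZMod (p^a) // P (fun x => c1 (v x))} := by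
    refine Equiv.subtypeEquivRight fun v => ?_
    rw [hP, isUnit_iff_cast_ne hp ha]
    simp only [map_sub, _root_.map_mul]
    exact Iff.rfl
  rw [Nat.card_congr e1, card_fiber hp ha P]
  have hcard : Nat.card {w : Fin 2 → ZMod p // P w} = p^2 - 1 := by
    have hiff : ∀ w : Fin 2 → ZMod p, P w ↔ ¬ (w = 0) := by
      intro w
      rw [hP]
      constructor
      · intro h h0
        rw [h0] at h
        simp at h
      · intro hne
        intro heq
        apply hne
        have h1 : w 1 = 0 := by
          by_contra h1
          exact hsqa ((w 0) * (w 1)⁻¹) (by field_simp; linear_combination heq)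
        have h0 : w 0 = 0 := by
          rw [h1] at heq
          have hz : w 0 * w 0 = 0 := by linear_combination heq
          exact mul_self_eq_zero.mp hz
        funext i
        fin_cases i
        · exact h0
        · exact h1
    rw [Nat.card_congr (Equiv.subtypeEquivRight hiff), Nat.card_eq_fintype_card,
      Fintype.card_subtype_compl, Fintype.card_subtype_eq, Fintype.card_fun,
      ZMod.card, Fintype.card_fin]
  rw [hcard, Fintype.card_fin]

end E
section F


def Jmat (N : ℕ) (ε : ZMod N) : Matrix (Fin 2) (Fin 2) (ZMod N) := !![0, ε; 1, 0]

lemma smul_one_fin_two {α : Type} [CommRing α] (a : α) :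
    a • (1 : Matrix (Fin 2) (Fin 2) α) = !![a, 0; 0, a] := by
  rw [Matrix.one_fin_two, Matrix.smul_of]
  ext i j
  fin_cases i <;> fin_cases j <;> simp

lemma Jmat_mul_self (N : ℕ) (ε : ZMod N) :
    Jmat N ε * Jmat N ε = ε • (1 : Matrix (Fin 2) (Fin 2) (ZMod N)) := by
  rw [Jmat, Matrix.mul_fin_two, smul_one_fin_two]
  congr 1 <;> ring

noncomputable def Xc {N : ℕ} (ε : ZMod N) (g : GL2 N) : Matrix (Fin 2) (Fin 2) (ZMod N) :=
  (g : Matrix (Fin 2) (Fin 2) (ZMod N)) * Jmat N ε * ((g⁻¹ : GL2 N) : Matrix (Fin 2) (Fin 2) (ZMod N))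

lemma Xc_mul_self {N : ℕ} (ε : ZMod N) (g : GL2 N) :
    Xc ε g * Xc ε g = ε • (1 : Matrix (Fin 2) (Fin 2) (ZMod N)) := by
  have h1 : ((g⁻¹ : GL2 N) : Matrix (Fin 2) (Fin 2) (ZMod N)) *
      (g : Matrix (Fin 2) (Fin 2) (ZMod N)) = 1 := g.inv_mul
  have h2 : (g : Matrix (Fin 2) (Fin 2) (ZMod N)) *
      ((g⁻¹ : GL2 N) : Matrix (Fin 2) (Fin 2) (ZMod N)) = 1 := g.mul_inv
  calc Xc ε g * Xc ε g
      = (g : Matrix (Fin 2) (Fin 2) (ZMod N)) * Jmat N ε *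
        (((g⁻¹ : GL2 N) : Matrix (Fin 2) (Fin 2) (ZMod N)) *
          (g : Matrix (Fin 2) (Fin 2) (ZMod N))) * Jmat N ε *
        ((g⁻¹ : GL2 N) : Matrix (Fin 2) (Fin 2) (ZMod N)) := by
        simp only [Xc, Matrix.mul_assoc]
  _ = (g : Matrix (Fin 2) (Fin 2) (ZMod N)) * (Jmat N ε * Jmat N ε) *
        ((g⁻¹ : GL2 N) : Matrix (Fin 2) (Fin 2) (ZMod N)) := by
        rw [h1]; simp only [Matrix.mul_one, Matrix.mul_assoc]
  _ = ε • ((g : Matrix (Fin 2) (Fin 2) (ZMod N)) *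
        ((g⁻¹ : GL2 N) : Matrix (Fin 2) (Fin 2) (ZMod N))) := by
        rw [Jmat_mul_self]
        rw [Matrix.mul_smul, Matrix.smul_mul, Matrix.mul_one]
  _ = ε • (1 : Matrix (Fin 2) (Fin 2) (ZMod N)) := by rw [h2]

lemma Xc_mul_val {N : ℕ} (ε : ZMod N) (g : GL2 N) :
    Xc ε g * (g : Matrix (Fin 2) (Fin 2) (ZMod N)) =
      (g : Matrix (Fin 2) (Fin 2) (ZMod N)) * Jmat N ε := by
  have h1 : ((g⁻¹ : GL2 N) : Matrix (Fin 2) (Fin 2) (ZMod N)) *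
      (g : Matrix (Fin 2) (Fin 2) (ZMod N)) = 1 := g.inv_mul
  rw [Xc, Matrix.mul_assoc, h1, Matrix.mul_one]

lemma mem_cns_iff {N : ℕ} (ε : ZMod N) (g : GL2 N) :
    g ∈ Cns N ε ↔ ((g : Matrix (Fin 2) (Fin 2) (ZMod N)) 1 1 =
      (g : Matrix (Fin 2) (Fin 2) (ZMod N)) 0 0 ∧
      (g : Matrix (Fin 2) (Fin 2) (ZMod N)) 0 1 =
        ε * (g : Matrix (Fin 2) (Fin 2) (ZMod N)) 1 0) := Iff.rfl

lemma cns_val_eq {N : ℕ} (ε : ZMod N) (h : GL2 N) (hm : h ∈ Cns N ε) :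
    (h : Matrix (Fin 2) (Fin 2) (ZMod N)) =
      (h : Matrix (Fin 2) (Fin 2) (ZMod N)) 0 0 • (1 : Matrix (Fin 2) (Fin 2) (ZMod N)) +
      (h : Matrix (Fin 2) (Fin 2) (ZMod N)) 1 0 • Jmat N ε := by
  obtain ⟨h1, h2⟩ := hm
  rw [smul_one_fin_two, Jmat, Matrix.smul_of]
  ext i j
  fin_cases i <;> fin_cases j <;>
    simp [h1, h2] <;> ring

lemma conj_mem_cns_iff {N : ℕ} (ε : ZMod N) (h : GL2 N) (hm : h ∈ Cns N ε) (g : GL2 N) :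
    g * h * g⁻¹ ∈ Cns N ε ↔
      ((h : Matrix (Fin 2) (Fin 2) (ZMod N)) 1 0 * (Xc ε g 1 1 - Xc ε g 0 0) = 0 ∧
       (h : Matrix (Fin 2) (Fin 2) (ZMod N)) 1 0 * (Xc ε g 0 1 - ε * Xc ε g 1 0) = 0) := by
  set a := (h : Matrix (Fin 2) (Fin 2) (ZMod N)) 0 0
  set b := (h : Matrix (Fin 2) (Fin 2) (ZMod N)) 1 0
  have hval : ((g * h * g⁻¹ : GL2 N) : Matrix (Fin 2) (Fin 2) (ZMod N)) =
      a • (1 : Matrix (Fin 2) (Fin 2) (ZMod N)) + b • Xc ε g := by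
    have : ((g * h * g⁻¹ : GL2 N) : Matrix (Fin 2) (Fin 2) (ZMod N)) =
        (g : Matrix (Fin 2) (Fin 2) (ZMod N)) * (h : Matrix (Fin 2) (Fin 2) (ZMod N)) *
          ((g⁻¹ : GL2 N) : Matrix (Fin 2) (Fin 2) (ZMod N)) := by
      simp [Units.val_mul]
    rw [this, cns_val_eq ε h hm]
    have h2 : (g : Matrix (Fin 2) (Fin 2) (ZMod N)) *
        ((g⁻¹ : GL2 N) : Matrix (Fin 2) (Fin 2) (ZMod N)) = 1 := g.mul_inv
    rw [Matrix.mul_add, Matrix.add_mul]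
    congr 1
    · rw [Matrix.mul_smul, Matrix.smul_mul, Matrix.mul_one, h2]
    · rw [Matrix.mul_smul, Matrix.smul_mul, Xc, Matrix.mul_assoc]
  rw [mem_cns_iff, hval]
  have e1 : ∀ i j : Fin 2, (a • (1 : Matrix (Fin 2) (Fin 2) (ZMod N)) + b • Xc ε g) i j
      = a * (1 : Matrix (Fin 2) (Fin 2) (ZMod N)) i j + b * Xc ε g i j := by
    intro i j; simp
  rw [e1, e1, e1, e1]
  simp only [Matrix.one_apply_eq, Matrix.one_apply_ne (show (1:Fin 2) ≠ 0 by decide),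
    Matrix.one_apply_ne (show (0:Fin 2) ≠ 1 by decide)]
  constructor
  · rintro ⟨c1, c2⟩
    constructor
    · linear_combination c1
    · linear_combination c2
  · rintro ⟨c1, c2⟩
    constructor
    · linear_combination c1
    · linear_combination c2

end F
section G
variable {p : ℕ}

lemma key_pm_J (hp : p.Prime) (hodd : Odd p) {b : ℕ} (hb : 0 < b)
    (ε' : ZMod (p^b)) (hε' : IsUnit ε') (hsq' : ∀ y : ZMod (p^b), y * y ≠ ε')
    (Y : Matrix (Fin 2) (Fin 2) (ZMod (p^b)))
    (h1 : Y 1 1 = Y 0 0) (h2 : Y 0 1 = ε' * Y 1 0)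
    (hYY : Y * Y = ε' • (1 : Matrix (Fin 2) (Fin 2) (ZMod (p^b)))) :
    Y = Jmat (p^b) ε' ∨ Y = - Jmat (p^b) ε' := by
  set a := Y 0 0 with ha
  set c := Y 1 0 with hc
  have hYform : Y = !![a, ε' * c; c, a] := by
    rw [Matrix.eta_fin_two Y, h1, h2]
  rw [hYform, Matrix.mul_fin_two, smul_one_fin_two] at hYY
  have e00 : a * a + ε' * c * c = ε' := by
    have := congrFun (congrFun hYY 0) 0
    simpa using this
  have e10 : c * a + a * c = 0 := by
    have := congrFun (congrFun hYY 1) 0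
    simpa using this
  have hac : a * c = 0 := by
    have h2u := isUnit_two hp hodd hb
    obtain ⟨u, hu⟩ := h2u
    have : (2 : ZMod (p^b)) * (a * c) = 0 := by linear_combination e10
    rw [← hu] at this
    calc a * c = ↑u⁻¹ * (↑u * (a * c)) := by rw [← mul_assoc, Units.inv_mul, one_mul]
    _ = 0 := by rw [this, mul_zero]
  have hcu : IsUnit c := by
    by_contra hcn
    have hnn : ¬ IsUnit (-(ε' * (c * c))) := by
      rw [IsUnit.neg_iff]
      intro hu
      exact hcn (isUnit_of_mul_isUnit_right (isUnit_of_mul_isUnit_right hu))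
    have haa : IsUnit (a * a) := by
      have : a * a = ε' + -(ε' * (c * c)) := by linear_combination e00
      rw [this]
      exact isUnit_add_nonunit hp hb hε' hnn
    have hau : IsUnit a := isUnit_of_mul_isUnit_left haa
    obtain ⟨u, hu⟩ := hau
    have hc0 : c = 0 := by
      calc c = ↑u⁻¹ * (a * c) := by rw [← hu, ← mul_assoc, Units.inv_mul, one_mul]
      _ = 0 := by rw [hac, mul_zero]
    apply hsq' a
    rw [← e00, hc0]
    ring
  have ha0 : a = 0 := by
    obtain ⟨u, hu⟩ := hcu
    calc a = (a * c) * ↑u⁻¹ := by rw [← hu, mul_assoc, Units.mul_inv, mul_one]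
    _ = 0 := by rw [hac, zero_mul]
  have hcc : c * c = 1 := by
    obtain ⟨u, hu⟩ := hε'
    have h3 : ε' * (c * c) = ε' * 1 := by rw [mul_one]; linear_combination e00 - (by rw [ha0]; ring : a * a = 0)
    rw [← hu] at h3
    calc c * c = ↑u⁻¹ * (↑u * (c * c)) := by rw [← mul_assoc, Units.inv_mul, one_mul]
    _ = ↑u⁻¹ * (↑u * 1) := by rw [h3]
    _ = 1 := by rw [← mul_assoc, Units.inv_mul, one_mul]
  rcases sq_eq_one_cases hp hodd hb c hcc with h | h
  · left
    rw [hYform, ha0, h, Jmat]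
    norm_num
  · right
    rw [hYform, ha0, h, Jmat]
    ext i j
    fin_cases i <;> fin_cases j <;> simp <;> ring
end G
section H
variable {p : ℕ}

def Tset (p k : ℕ) (ε : ZMod (p^k)) (j : ℕ) : Set (GL2 (p^k)) :=
  {g | (p : ZMod (p^k))^j * (Xc ε g 1 1 - Xc ε g 0 0) = 0 ∧
       (p : ZMod (p^k))^j * (Xc ε g 0 1 - ε * Xc ε g 1 0) = 0}

lemma map_smul_one {n m : ℕ} (f : ZMod n →+* ZMod m) (ε : ZMod n) :
    (ε • (1 : Matrix (Fin 2) (Fin 2) (ZMod n))).map f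
      = (f ε) • (1 : Matrix (Fin 2) (Fin 2) (ZMod m)) := by
  rw [smul_one_fin_two, smul_one_fin_two]
  ext i j
  fin_cases i <;> fin_cases j <;> simp

lemma map_Jmat {n m : ℕ} (f : ZMod n →+* ZMod m) (ε : ZMod n) :
    (Jmat n ε).map f = Jmat m (f ε) := by
  rw [Jmat, Jmat]
  ext i j
  fin_cases i <;> fin_cases j <;> simp

lemma tset_iff {k : ℕ} (hp : p.Prime) (hodd : Odd p) (hk : 0 < k) (ε : ZMod (p^k))
    (hε : IsUnit ε) (hsq : ¬∃ x : ZMod (p^k), x^2 = ε) {j : ℕ} (hj : j < k)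
    (g : GL2 (p^k)) :
    g ∈ Tset p k ε j ↔
      (((p : ZMod (p^k))^j * ((g : Matrix (Fin 2) (Fin 2) (ZMod (p^k))) 1 1
          - (g : Matrix (Fin 2) (Fin 2) (ZMod (p^k))) 0 0) = 0 ∧
        (p : ZMod (p^k))^j * ((g : Matrix (Fin 2) (Fin 2) (ZMod (p^k))) 0 1
          - ε * (g : Matrix (Fin 2) (Fin 2) (ZMod (p^k))) 1 0) = 0) ∨
       ((p : ZMod (p^k))^j * ((g : Matrix (Fin 2) (Fin 2) (ZMod (p^k))) 1 1
          + (g : Matrix (Fin 2) (Fin 2) (ZMod (p^k))) 0 0) = 0 ∧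
        (p : ZMod (p^k))^j * ((g : Matrix (Fin 2) (Fin 2) (ZMod (p^k))) 0 1
          + ε * (g : Matrix (Fin 2) (Fin 2) (ZMod (p^k))) 1 0) = 0)) := by
  have hb : 0 < k - j := by omega
  have hbk : k - j ≤ k := by omega
  have hkbj : k = (k - j) + j := by omega
  set b := k - j with hbdef
  set φ := ZMod.castHom (pow_dvd_pow p hbk) (ZMod (p^b)) with hφ
  have hZ : ∀ x : ZMod (p^k), φ x = 0 ↔ (p : ZMod (p^k))^j * x = 0 := fun x =>
    cast_eq_zero_iff_ann hp hkbj x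
  set ε' := φ ε with hε'
  have hε'unit : IsUnit ε' := hε.map φ
  have hsq' : ∀ y : ZMod (p^b), y * y ≠ ε' := fun y =>
    nonsq_all_levels hp hodd hk hb hbk ε hε hsq y
  set M := (g : Matrix (Fin 2) (Fin 2) (ZMod (p^k))).map φ with hM
  set Y := (Xc ε g).map φ with hY
  have hYM : Y * M = M * Jmat (p^b) ε' := by
    rw [hY, hM, ← Matrix.map_mul, Xc_mul_val, Matrix.map_mul, map_Jmat]
  have hMdet : IsUnit M.det := by
    have hdetmap : ((g : Matrix (Fin 2) (Fin 2) (ZMod (p^k))).map ⇑φ).det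
        = φ ((g : Matrix (Fin 2) (Fin 2) (ZMod (p^k))).det) := by
      rw [RingHom.map_det]; rfl
    rw [hM, hdetmap]
    exact ((Matrix.isUnit_iff_isUnit_det _).mp g.isUnit).map φ
  obtain ⟨U, hU⟩ := (Matrix.isUnit_iff_isUnit_det M).mpr hMdet
  -- entry abbreviations
  set m00 := φ ((g : Matrix (Fin 2) (Fin 2) (ZMod (p^k))) 0 0) with hm00
  set m01 := φ ((g : Matrix (Fin 2) (Fin 2) (ZMod (p^k))) 0 1) with hm01
  set m10 := φ ((g : Matrix (Fin 2) (Fin 2) (ZMod (p^k))) 1 0) with hm10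
  set m11 := φ ((g : Matrix (Fin 2) (Fin 2) (ZMod (p^k))) 1 1) with hm11
  have hMeta : M = !![m00, m01; m10, m11] := by
    rw [hM]
    ext i j
    fin_cases i <;> fin_cases j <;> simp [Matrix.map_apply, hm00, hm01, hm10, hm11]
  have hMJ : M * Jmat (p^b) ε' = !![m01, ε' * m00; m11, ε' * m10] := by
    rw [hMeta, Jmat, Matrix.mul_fin_two]
    congr 1 <;> ring
  have hJM : Jmat (p^b) ε' * M = !![ε' * m10, ε' * m11; m00, m01] := by
    rw [hMeta, Jmat, Matrix.mul_fin_two]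
    congr 1 <;> ring
  constructor
  · rintro ⟨t1, t2⟩
    have hY1 : Y 1 1 = Y 0 0 := by
      have := (hZ _).mpr t1
      rw [_root_.map_sub] at this
      have h' : Y 1 1 - Y 0 0 = 0 := this
      linear_combination h'
    have hY2 : Y 0 1 = ε' * Y 1 0 := by
      have := (hZ _).mpr t2
      rw [_root_.map_sub, _root_.map_mul] at this
      have h' : Y 0 1 - ε' * Y 1 0 = 0 := this
      linear_combination h'
    have hYY : Y * Y = ε' • (1 : Matrix (Fin 2) (Fin 2) (ZMod (p^b))) := by
      rw [hY, ← Matrix.map_mul, Xc_mul_self, map_smul_one]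
    rcases key_pm_J hp hodd hb ε' hε'unit hsq' Y hY1 hY2 hYY with hYJ | hYJ
    · left
      have hcomm : M * Jmat (p^b) ε' = Jmat (p^b) ε' * M := by
        rw [← hYM, hYJ]
      rw [hMJ, hJM] at hcomm
      have e10 : m11 = m00 := by
        have := congrFun (congrFun hcomm 1) 0
        simpa using this
      have e00 : m01 = ε' * m10 := by
        have := congrFun (congrFun hcomm 0) 0
        simpa using this
      constructor
      · rw [← hZ, _root_.map_sub]
        have : m11 - m00 = 0 := by rw [e10, sub_self]
        exact this
      · rw [← hZ, _root_.map_sub, _root_.map_mul]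
        have : m01 - ε' * m10 = 0 := by rw [e00, sub_self]
        exact this
    · right
      have hcomm : M * Jmat (p^b) ε' = -(Jmat (p^b) ε' * M) := by
        rw [← hYM, hYJ, Matrix.neg_mul]
      rw [hMJ, hJM] at hcomm
      have e10 : m11 = -m00 := by
        have := congrFun (congrFun hcomm 1) 0
        simpa using this
      have e00 : m01 = -(ε' * m10) := by
        have := congrFun (congrFun hcomm 0) 0
        simpa using this
      constructor
      · rw [← hZ, _root_.map_add]
        have : m11 + m00 = 0 := by rw [e10]; ring
        exact this
      · rw [← hZ, _root_.map_add, _root_.map_mul]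
        have : m01 + ε' * m10 = 0 := by rw [e00]; ring
        exact this
  · intro hcase
    set V : Matrix (Fin 2) (Fin 2) (ZMod (p^b)) := ((U⁻¹ : (Matrix (Fin 2) (Fin 2) (ZMod (p^b)))ˣ) : Matrix (Fin 2) (Fin 2) (ZMod (p^b))) with hV
    have hMU : M * V = 1 := by rw [hV, ← hU, Units.mul_inv]
    rcases hcase with ⟨t1, t2⟩ | ⟨t1, t2⟩
    · -- commuting case : Y = J'
      have e10 : m11 = m00 := by
        have := (hZ _).mpr t1
        rw [_root_.map_sub] at this
        have h' : m11 - m00 = 0 := this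
        linear_combination h'
      have e00 : m01 = ε' * m10 := by
        have := (hZ _).mpr t2
        rw [_root_.map_sub, _root_.map_mul] at this
        have h' : m01 - ε' * m10 = 0 := this
        linear_combination h'
      have hcomm : M * Jmat (p^b) ε' = Jmat (p^b) ε' * M := by
        rw [hMJ, hJM]
        congr 1 <;> rw [e10, e00] <;> ring
      have hYJ : Y = Jmat (p^b) ε' := by
        calc Y = Y * (M * V) := by rw [hMU, Matrix.mul_one]
        _ = (M * Jmat (p^b) ε') * V := by rw [← Matrix.mul_assoc, hYM]
        _ = (Jmat (p^b) ε' * M) * V := by rw [hcomm]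
        _ = Jmat (p^b) ε' * (M * V) := by rw [Matrix.mul_assoc]
        _ = Jmat (p^b) ε' := by rw [hMU, Matrix.mul_one]
      constructor
      · rw [← hZ, _root_.map_sub]
        have h1 : Y 1 1 = 0 := by rw [hYJ]; simp [Jmat]
        have h2 : Y 0 0 = 0 := by rw [hYJ]; simp [Jmat]
        have : Y 1 1 - Y 0 0 = 0 := by rw [h1, h2, sub_self]
        exact this
      · rw [← hZ, _root_.map_sub, _root_.map_mul]
        have h1 : Y 0 1 = ε' := by rw [hYJ]; simp [Jmat]
        have h2 : Y 1 0 = 1 := by rw [hYJ]; simp [Jmat]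
        have : Y 0 1 - ε' * Y 1 0 = 0 := by rw [h1, h2]; ring
        exact this
    · -- anticommuting case : Y = -J'
      have e10 : m11 = -m00 := by
        have := (hZ _).mpr t1
        rw [_root_.map_add] at this
        have h' : m11 + m00 = 0 := this
        linear_combination h'
      have e00 : m01 = -(ε' * m10) := by
        have := (hZ _).mpr t2
        rw [_root_.map_add, _root_.map_mul] at this
        have h' : m01 + ε' * m10 = 0 := this
        linear_combination h'
      have hcomm : M * Jmat (p^b) ε' = -(Jmat (p^b) ε') * M := by
        rw [hMJ, Matrix.neg_mul, hJM]
        rw [show (-!![ε' * m10, ε' * m11; m00, m01]) = !![-(ε' * m10), -(ε' * m11); -m00, -m01] by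
          ext i j; fin_cases i <;> fin_cases j <;> simp]
        congr 1 <;> rw [e10, e00] <;> ring
      have hYJ : Y = -(Jmat (p^b) ε') := by
        calc Y = Y * (M * V) := by rw [hMU, Matrix.mul_one]
        _ = (M * Jmat (p^b) ε') * V := by rw [← Matrix.mul_assoc, hYM]
        _ = (-(Jmat (p^b) ε') * M) * V := by rw [hcomm]
        _ = -(Jmat (p^b) ε') * (M * V) := by rw [Matrix.mul_assoc]
        _ = -(Jmat (p^b) ε') := by rw [hMU, Matrix.mul_one]
      constructor
      · rw [← hZ, _root_.map_sub]
        have h1 : Y 1 1 = 0 := by rw [hYJ]; simp [Jmat]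
        have h2 : Y 0 0 = 0 := by rw [hYJ]; simp [Jmat]
        have : Y 1 1 - Y 0 0 = 0 := by rw [h1, h2, sub_self]
        exact this
      · rw [← hZ, _root_.map_sub, _root_.map_mul]
        have h1 : Y 0 1 = -ε' := by rw [hYJ]; simp [Jmat]
        have h2 : Y 1 0 = -1 := by rw [hYJ]; simp [Jmat]
        have : Y 0 1 - ε' * Y 1 0 = 0 := by rw [h1, h2]; ring
        exact this
end H
section I
variable {p : ℕ}

lemma ann_nonunit (hp : p.Prime) {k j : ℕ} (hj : j < k) {t : ZMod (p^k)}
    (ht : (p : ZMod (p^k))^j * t = 0) : ¬ IsUnit t := by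
  intro hu
  obtain ⟨u, hu⟩ := hu
  have hp0 : (p : ZMod (p^k))^j = 0 := by
    calc (p : ZMod (p^k))^j = ((p : ZMod (p^k))^j * t) * ↑u⁻¹ := by
          rw [← hu, mul_assoc, Units.mul_inv, mul_one]
    _ = 0 := by rw [ht, zero_mul]
  have : ((p^j : ℕ) : ZMod (p^k)) = 0 := by push_cast; exact hp0
  rw [ZMod.natCast_eq_zero_iff] at this
  have := Nat.le_of_dvd (pow_pos hp.pos j) this
  have := Nat.pow_le_pow_iff_right hp.one_lt |>.mp this
  omega

def Aset (p k : ℕ) (ε : ZMod (p^k)) (j : ℕ) (s : ZMod (p^k)) : Set (GL2 (p^k)) :=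
  {g | (p : ZMod (p^k))^j * ((g : Matrix (Fin 2) (Fin 2) (ZMod (p^k))) 1 1
          - s * (g : Matrix (Fin 2) (Fin 2) (ZMod (p^k))) 0 0) = 0 ∧
       (p : ZMod (p^k))^j * ((g : Matrix (Fin 2) (Fin 2) (ZMod (p^k))) 0 1
          - s * (ε * (g : Matrix (Fin 2) (Fin 2) (ZMod (p^k))) 1 0)) = 0}

lemma tset_eq_union {k : ℕ} (hp : p.Prime) (hodd : Odd p) (hk : 0 < k) (ε : ZMod (p^k))
    (hε : IsUnit ε) (hsq : ¬∃ x : ZMod (p^k), x^2 = ε) {j : ℕ} (hj : j < k) :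
    Tset p k ε j = Aset p k ε j 1 ∪ Aset p k ε j (-1) := by
  ext g
  rw [Set.mem_union]
  rw [tset_iff hp hodd hk ε hε hsq hj g]
  constructor
  · rintro (⟨t1, t2⟩ | ⟨t1, t2⟩)
    · exact Or.inl ⟨by linear_combination t1, by linear_combination t2⟩
    · exact Or.inr ⟨by linear_combination t1, by linear_combination t2⟩
  · rintro (⟨t1, t2⟩ | ⟨t1, t2⟩)
    · exact Or.inl ⟨by linear_combination t1, by linear_combination t2⟩
    · exact Or.inr ⟨by linear_combination t1, by linear_combination t2⟩

noncomputable def asetEquiv {k : ℕ} (hp : p.Prime) (hk : 0 < k) (ε : ZMod (p^k))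
    {j : ℕ} (hj : j < k) (s : ZMod (p^k)) (hs : s * s = 1) (hsu : IsUnit s) :
    (Aset p k ε j s) ≃
      ({v : Fin 2 → ZMod (p^k) // IsUnit (v 0 * v 0 - ε * (v 1 * v 1))} ×
       ({d : ZMod (p^k) // (p : ZMod (p^k))^j * d = 0} ×
        {d : ZMod (p^k) // (p : ZMod (p^k))^j * d = 0})) where
  toFun g := by
    refine ⟨⟨![(g.1 : Matrix (Fin 2) (Fin 2) (ZMod (p^k))) 0 0,
               (g.1 : Matrix (Fin 2) (Fin 2) (ZMod (p^k))) 1 0], ?_⟩,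
            ⟨(g.1 : Matrix (Fin 2) (Fin 2) (ZMod (p^k))) 1 1
               - s * (g.1 : Matrix (Fin 2) (Fin 2) (ZMod (p^k))) 0 0, g.2.1⟩,
            ⟨(g.1 : Matrix (Fin 2) (Fin 2) (ZMod (p^k))) 0 1
               - s * (ε * (g.1 : Matrix (Fin 2) (Fin 2) (ZMod (p^k))) 1 0), g.2.2⟩⟩
    set x := (g.1 : Matrix (Fin 2) (Fin 2) (ZMod (p^k))) 0 0
    set y := (g.1 : Matrix (Fin 2) (Fin 2) (ZMod (p^k))) 0 1
    set z := (g.1 : Matrix (Fin 2) (Fin 2) (ZMod (p^k))) 1 0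
    set w := (g.1 : Matrix (Fin 2) (Fin 2) (ZMod (p^k))) 1 1
    have hdet : IsUnit (x * w - y * z) := by
      have h := (Matrix.isUnit_iff_isUnit_det _).mp g.1.isUnit
      rwa [Matrix.det_fin_two] at h
    have hann : (p : ZMod (p^k))^j * (x * (w - s*x) - (y - s*(ε*z)) * z) = 0 := by
      have h1 := g.2.1
      have h2 := g.2.2
      linear_combination x * h1 - z * h2
    have hnon : ¬ IsUnit (x * (w - s*x) - (y - s*(ε*z)) * z) := ann_nonunit hp hj hann
    have hsx : s * (x * x - ε * (z * z)) =
        (x * w - y * z) + -(x * (w - s*x) - (y - s*(ε*z)) * z) := by ring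
    have hu2 : IsUnit (s * (x * x - ε * (z * z))) := by
      rw [hsx]
      exact isUnit_add_nonunit hp hk hdet (by rwa [IsUnit.neg_iff])
    have : x * x - ε * (z * z) = s * (s * (x * x - ε * (z * z))) := by
      linear_combination (-(x * x - ε * (z * z))) * hs
    have hres : IsUnit (x * x - ε * (z * z)) := by rw [this]; exact hsu.mul hu2
    simpa using hres
  invFun vde := by
    set v := vde.1.1
    set d := vde.2.1.1
    set e := vde.2.2.1
    have hdet : IsUnit (!![v 0, s*(ε * v 1) + e; v 1, s * v 0 + d]).det := by
      rw [Matrix.det_fin_two_of]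
      have hann : (p : ZMod (p^k))^j * (v 0 * d - e * v 1) = 0 := by
        have h1 := vde.2.1.2
        have h2 := vde.2.2.2
        linear_combination v 0 * h1 - v 1 * h2
      have hnon := ann_nonunit hp hj hann
      have hsx : v 0 * (s * v 0 + d) - (s*(ε * v 1) + e) * v 1 =
          s * (v 0 * v 0 - ε * (v 1 * v 1)) + (v 0 * d - e * v 1) := by ring
      rw [hsx]
      exact isUnit_add_nonunit hp hk (hsu.mul vde.1.2) hnon
    refine ⟨((Matrix.isUnit_iff_isUnit_det _).mpr hdet).unit, ?_, ?_⟩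
    · show (p : ZMod (p^k))^j * _ = 0
      rw [IsUnit.unit_spec]
      have h1 := vde.2.1.2
      have : (!![v 0, s*(ε * v 1) + e; v 1, s * v 0 + d]) 1 1
          - s * (!![v 0, s*(ε * v 1) + e; v 1, s * v 0 + d]) 0 0 = d := by
        simp
        try ring
      rw [this]
      exact h1
    · show (p : ZMod (p^k))^j * _ = 0
      rw [IsUnit.unit_spec]
      have h2 := vde.2.2.2
      have : (!![v 0, s*(ε * v 1) + e; v 1, s * v 0 + d]) 0 1
          - s * (ε * (!![v 0, s*(ε * v 1) + e; v 1, s * v 0 + d]) 1 0) = e := by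
        simp
        try ring
      rw [this]
      exact h2
  left_inv g := by
    apply Subtype.ext
    apply Units.ext
    rw [IsUnit.unit_spec]
    ext i j'
    fin_cases i <;> fin_cases j' <;> (simp; try ring)
  right_inv vde := by
    obtain ⟨v, d, e⟩ := vde
    dsimp only
    refine Prod.ext (Subtype.ext ?_) (Prod.ext (Subtype.ext ?_) (Subtype.ext ?_)) <;>
      simp only [IsUnit.unit_spec]
    · funext i
      fin_cases i <;> simp
    · simp
      try ring
    · simp
      try ring
end I
section J
variable {p : ℕ}

lemma unit_cancel_ann {k : ℕ} {c t : ZMod (p^k)} (hc : IsUnit c) {j : ℕ}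
    (h : (p : ZMod (p^k))^j * (c * t) = 0) : (p : ZMod (p^k))^j * t = 0 := by
  obtain ⟨u, hu⟩ := hc
  have hinv : (↑u⁻¹ : ZMod (p^k)) * c = 1 := by rw [← hu, Units.inv_mul]
  linear_combination (↑u⁻¹ : ZMod (p^k)) * h + (-((p : ZMod (p^k))^j * t)) * hinv

lemma aset_disjoint {k : ℕ} (hp : p.Prime) (hodd : Odd p) (hk : 0 < k) (ε : ZMod (p^k))
    (hε : IsUnit ε) {j : ℕ} (hj : j < k) :
    Disjoint (Aset p k ε j 1) (Aset p k ε j (-1)) := by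
  rw [Set.disjoint_left]
  rintro g ⟨a1, a2⟩ ⟨b1, b2⟩
  set x := (g : Matrix (Fin 2) (Fin 2) (ZMod (p^k))) 0 0
  set y := (g : Matrix (Fin 2) (Fin 2) (ZMod (p^k))) 0 1
  set z := (g : Matrix (Fin 2) (Fin 2) (ZMod (p^k))) 1 0
  set w := (g : Matrix (Fin 2) (Fin 2) (ZMod (p^k))) 1 1
  have h2 : IsUnit (2 : ZMod (p^k)) := isUnit_two hp hodd hk
  have hx : (p : ZMod (p^k))^j * x = 0 :=
    unit_cancel_ann h2 (by linear_combination b1 - a1)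
  have hy : (p : ZMod (p^k))^j * y = 0 :=
    unit_cancel_ann h2 (by linear_combination a2 + b2)
  have hw : (p : ZMod (p^k))^j * w = 0 :=
    unit_cancel_ann h2 (by linear_combination a1 + b1)
  have hz : (p : ZMod (p^k))^j * z = 0 :=
    unit_cancel_ann hε (unit_cancel_ann h2 (by linear_combination b2 - a2))
  have hdet : IsUnit (x * w - y * z) := by
    have h := (Matrix.isUnit_iff_isUnit_det _).mp g.isUnit
    rwa [Matrix.det_fin_two] at h
  exact ann_nonunit hp hj (by linear_combination w * hx - y * hz) hdet

lemma hsq_level1 {k : ℕ} (hp : p.Prime) (hodd : Odd p) (hk : 0 < k) (ε : ZMod (p^k))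
    (hε : IsUnit ε) (hsq : ¬∃ x : ZMod (p^k), x^2 = ε) (y : ZMod p) :
    y * y ≠ ZMod.castHom (dvd_pow_self p hk.ne') (ZMod p) ε := by
  intro hy
  obtain ⟨z, hz⟩ := exists_sq_lift hp hodd hk ε hε ⟨y, hy⟩
  exact hsq ⟨z, by rw [pow_two]; exact hz⟩

lemma card_aset {k : ℕ} (hp : p.Prime) (hodd : Odd p) (hk : 0 < k) (ε : ZMod (p^k))
    (hε : IsUnit ε) (hsq : ¬∃ x : ZMod (p^k), x^2 = ε) {j : ℕ} (hj : j < k)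
    (s : ZMod (p^k)) (hs : s * s = 1) (hsu : IsUnit s) :
    Nat.card (Aset p k ε j s) = ((p^2 - 1) * (p^(k-1))^2) * (p^j * p^j) := by
  rw [Nat.card_congr (asetEquiv hp hk ε hj s hs hsu), Nat.card_prod, Nat.card_prod]
  rw [card_pairs hp hk ε (hsq_level1 hp hodd hk ε hε hsq)]
  rw [card_ann hp (by omega : k = (k-j) + j), mul_assoc]

lemma card_tset {k : ℕ} (hp : p.Prime) (hodd : Odd p) (hk : 0 < k) (ε : ZMod (p^k))
    (hε : IsUnit ε) (hsq : ¬∃ x : ZMod (p^k), x^2 = ε) {j : ℕ} (hj : j < k) :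
    Nat.card (Tset p k ε j) = 2 * p^(2*j) * ((p^2 - 1) * (p^(k-1))^2) := by
  haveI : NeZero (p^k) := ⟨pow_ne_zero k hp.ne_zero⟩
  rw [tset_eq_union hp hodd hk ε hε hsq hj]
  rw [Nat.card_coe_set_eq, Set.ncard_union_eq (aset_disjoint hp hodd hk ε hε hj)
    (Set.toFinite _) (Set.toFinite _)]
  rw [← Nat.card_coe_set_eq, ← Nat.card_coe_set_eq]
  rw [card_aset hp hodd hk ε hε hsq hj 1 (by ring) isUnit_one,
    card_aset hp hodd hk ε hε hsq hj (-1) (by ring) isUnit_one.neg]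
  rw [← pow_add]
  ring

noncomputable def cnsEquivPairs {k : ℕ} (ε : ZMod (p^k)) :
    ↥(Cns (p^k) ε) ≃ {v : Fin 2 → ZMod (p^k) // IsUnit (v 0 * v 0 - ε * (v 1 * v 1))} where
  toFun h := ⟨![(h.1 : Matrix (Fin 2) (Fin 2) (ZMod (p^k))) 0 0,
                (h.1 : Matrix (Fin 2) (Fin 2) (ZMod (p^k))) 1 0], by
    have hdet := (Matrix.isUnit_iff_isUnit_det _).mp h.1.isUnit
    rw [Matrix.det_fin_two] at hdet
    have heq : (h.1 : Matrix (Fin 2) (Fin 2) (ZMod (p^k))) 0 0 *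
          (h.1 : Matrix (Fin 2) (Fin 2) (ZMod (p^k))) 1 1 -
        (h.1 : Matrix (Fin 2) (Fin 2) (ZMod (p^k))) 0 1 *
          (h.1 : Matrix (Fin 2) (Fin 2) (ZMod (p^k))) 1 0 =
        (h.1 : Matrix (Fin 2) (Fin 2) (ZMod (p^k))) 0 0 *
          (h.1 : Matrix (Fin 2) (Fin 2) (ZMod (p^k))) 0 0 -
          ε * ((h.1 : Matrix (Fin 2) (Fin 2) (ZMod (p^k))) 1 0 *
            (h.1 : Matrix (Fin 2) (Fin 2) (ZMod (p^k))) 1 0) := by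
      rw [h.2.1, h.2.2]; ring
    rw [heq] at hdet
    simpa using hdet⟩
  invFun v := ⟨((Matrix.isUnit_iff_isUnit_det
      (!![v.1 0, ε * v.1 1; v.1 1, v.1 0])).mpr (by
        rw [Matrix.det_fin_two_of]
        have : v.1 0 * v.1 0 - ε * v.1 1 * v.1 1
            = v.1 0 * v.1 0 - ε * (v.1 1 * v.1 1) := by ring
        rw [this]
        exact v.2)).unit, by
    refine ⟨?_, ?_⟩ <;> simp only [IsUnit.unit_spec] <;> simp⟩
  left_inv h := by
    apply Subtype.ext
    apply Units.ext
    rw [IsUnit.unit_spec]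
    ext i j'
    fin_cases i <;> fin_cases j' <;> simp [h.2.1, h.2.2]
  right_inv v := by
    apply Subtype.ext
    funext i
    fin_cases i <;> simp only [IsUnit.unit_spec] <;> simp

lemma card_cns {k : ℕ} (hp : p.Prime) (hodd : Odd p) (hk : 0 < k) (ε : ZMod (p^k))
    (hε : IsUnit ε) (hsq : ¬∃ x : ZMod (p^k), x^2 = ε) :
    Nat.card (Cns (p^k) ε) = (p^2 - 1) * (p^(k-1))^2 := by
  rw [Nat.card_congr (cnsEquivPairs ε),
    card_pairs hp hk ε (hsq_level1 hp hodd hk ε hε hsq)]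

lemma card_gl2 {k : ℕ} (hp : p.Prime) (hk : 0 < k) :
    Nat.card (GL2 (p^k)) = ((p^2 - 1) * (p^2 - p)) * (p^(k-1))^4 := by
  rw [Nat.card_congr (glEquivSubtype (α := ZMod (p^k))), card_GL_subtype hp hk]

end J
section K
variable {p : ℕ}

lemma arith1 {k : ℕ} (hp : p.Prime) (hk : 0 < k) :
    ((p^2 - 1) * (p^2 - p)) * (p^(k-1))^4
      = (p^(2*k) - p^(2*k-1)) * ((p^2 - 1) * (p^(k-1))^2) := by
  have e1 : (p^(k-1))^4 = p^((k-1)*4) := (pow_mul p (k-1) 4).symm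
  have e2 : (p^(k-1))^2 = p^((k-1)*2) := (pow_mul p (k-1) 2).symm
  have e3 : p * p^((k-1)*4) = p^(4*k-3) := by
    rw [← pow_succ']
    congr 1
    omega
  have e4 : p^(2*k-1) * p^((k-1)*2) = p^(4*k-3) := by
    rw [← pow_add]
    congr 1
    omega
  have h2 : p^(2*k) - p^(2*k-1) = p^(2*k-1) * (p-1) := by
    have hpow : p^(2*k) = p^(2*k-1) * p := by
      rw [← pow_succ]
      congr 1
      omega
    rw [hpow, Nat.mul_sub, Nat.mul_one]
  have h3 : p^2 - p = p * (p-1) := by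
    rw [Nat.mul_sub, Nat.mul_one, ← pow_two]
  rw [e1, e2, h2, h3]
  calc (p^2 - 1) * (p * (p-1)) * p^((k-1)*4)
      = (p^2 - 1) * (p-1) * (p * p^((k-1)*4)) := by ring
  _ = (p^2 - 1) * (p-1) * p^(4*k-3) := by rw [e3]
  _ = (p^2 - 1) * (p-1) * (p^(2*k-1) * p^((k-1)*2)) := by rw [e4]
  _ = p^(2*k-1) * (p-1) * ((p^2 - 1) * p^((k-1)*2)) := by ring

-- the subgroup of `Cns` with lower-left entry divisible by `c`
def cnsLevel (N : ℕ) (ε : ZMod N) (c : ZMod N) : Subgroup (GL2 N) where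
  carrier := {g | g ∈ Cns N ε ∧
    ∃ t, (g : Matrix (Fin 2) (Fin 2) (ZMod N)) 1 0 = c * t}
  one_mem' := ⟨(Cns N ε).one_mem, 0, by simp [Matrix.one_apply]⟩
  mul_mem' := by
    rintro a b ⟨ha, ta, hta⟩ ⟨hb, tb, htb⟩
    refine ⟨(Cns N ε).mul_mem ha hb, ?_⟩
    refine ⟨ta * (b : Matrix (Fin 2) (Fin 2) (ZMod N)) 0 0 +
      (a : Matrix (Fin 2) (Fin 2) (ZMod N)) 1 1 * tb, ?_⟩
    show ((a : Matrix (Fin 2) (Fin 2) (ZMod N)) * (b : Matrix (Fin 2) (Fin 2) (ZMod N))) 1 0 = _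
    rw [Matrix.mul_apply, Fin.sum_univ_two, hta, htb]
    ring
  inv_mem' := by
    rintro a ⟨ha, ta, hta⟩
    refine ⟨(Cns N ε).inv_mem ha, ?_⟩
    have hcoe : ((a⁻¹ : GL2 N) : Matrix (Fin 2) (Fin 2) (ZMod N)) =
        ((a : Matrix (Fin 2) (Fin 2) (ZMod N)))⁻¹ := by
      rw [← Matrix.coe_units_inv]
    have hinv : ((a : Matrix (Fin 2) (Fin 2) (ZMod N)))⁻¹ =
        Ring.inverse (a : Matrix (Fin 2) (Fin 2) (ZMod N)).det •
          (a : Matrix (Fin 2) (Fin 2) (ZMod N)).adjugate := Matrix.inv_def _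
    refine ⟨-(Ring.inverse (a : Matrix (Fin 2) (Fin 2) (ZMod N)).det * ta), ?_⟩
    rw [hcoe, hinv, Matrix.adjugate_fin_two]
    simp only [Matrix.smul_apply, Matrix.cons_val', Matrix.cons_val_zero,
      Matrix.cons_val_one, Matrix.head_cons, Matrix.head_fin_const,
      Matrix.empty_val', Matrix.cons_val_fin_one, Matrix.of_apply, smul_eq_mul]
    rw [hta]
    ring

lemma conjCount_eq_card {N : ℕ} (ε' : ZMod N) (R : Subgroup (GL2 N)) :
    conjCount ((Cns N ε' : Subgroup (GL2 N)) : Set (GL2 N)) R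
      = Nat.card {g : GL2 N | ∀ r ∈ R, g * r * g⁻¹ ∈ Cns N ε'} := rfl

end K
section L
variable {p : ℕ}

lemma conjCount_bot {k : ℕ} (hp : p.Prime) (ε : ZMod (p^k)) :
    conjCount ((Cns (p^k) ε : Subgroup (GL2 (p^k))) : Set (GL2 (p^k))) ⊥
      = Nat.card (GL2 (p^k)) := by
  rw [conjCount_eq_card]
  have huniv : {g : GL2 (p^k) | ∀ r ∈ (⊥ : Subgroup (GL2 (p^k))), g * r * g⁻¹ ∈ Cns (p^k) ε}
      = Set.univ := by
    ext g
    simp only [Set.mem_setOf_eq, Set.mem_univ, iff_true]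
    intro r hr
    rw [Subgroup.mem_bot] at hr
    subst hr
    simpa using (Cns (p^k) ε).one_mem
  rw [huniv]
  exact Nat.card_congr (Equiv.Set.univ _)

lemma conjCount_top {k : ℕ} (hp : p.Prime) (hk : 0 < k) (ε : ZMod (p^k)) :
    conjCount ((Cns (p^k) ε : Subgroup (GL2 (p^k))) : Set (GL2 (p^k))) ⊤ = 0 := by
  rw [conjCount_eq_card]
  haveI : Fact (1 < p^k) := ⟨Nat.one_lt_pow hk.ne' hp.one_lt⟩
  have hdet : IsUnit (!![(1:ZMod (p^k)), 1; 0, 1]).det := by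
    rw [Matrix.det_fin_two_of]
    norm_num
  set u := ((Matrix.isUnit_iff_isUnit_det _).mpr hdet).unit with hu
  have huval : (u : Matrix (Fin 2) (Fin 2) (ZMod (p^k))) = !![(1:ZMod (p^k)), 1; 0, 1] :=
    ((Matrix.isUnit_iff_isUnit_det _).mpr hdet).unit_spec
  have hune : u ∉ Cns (p^k) ε := by
    rintro ⟨h1, h2⟩
    rw [huval] at h2
    simp at h2
  have hempty : {g : GL2 (p^k) | ∀ r ∈ (⊤ : Subgroup (GL2 (p^k))), g * r * g⁻¹ ∈ Cns (p^k) ε}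
      = ∅ := by
    ext g
    simp only [Set.mem_setOf_eq, Set.mem_empty_iff_false, iff_false]
    intro hall
    have h1 := hall (g⁻¹ * u * g) (Subgroup.mem_top _)
    have heq : g * (g⁻¹ * u * g) * g⁻¹ = u := by group
    rw [heq] at h1
    exact hune h1
  rw [hempty]
  exact Nat.card_of_isEmpty

lemma exists_R_two_pj {k : ℕ} (hp : p.Prime) (hodd : Odd p) (hk : 0 < k) (ε : ZMod (p^k))
    (hε : IsUnit ε) (hsq : ¬∃ x : ZMod (p^k), x^2 = ε) {j : ℕ} (hj : j < k) :
    ∃ R : Subgroup (GL2 (p^k)),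
      conjCount ((Cns (p^k) ε : Subgroup (GL2 (p^k))) : Set (GL2 (p^k))) R
        = (2 * p^(2*j)) *
          Nat.card ((Cns (p^k) ε : Subgroup (GL2 (p^k))) : Set (GL2 (p^k))) := by
  haveI : NeZero (p^k) := ⟨pow_ne_zero k hp.ne_zero⟩
  set Mr := !![(1 : ZMod (p^k)), ε * (p:ZMod (p^k))^j; (p:ZMod (p^k))^j, 1] with hMr
  have hdet : IsUnit Mr.det := by
    rw [hMr, Matrix.det_fin_two_of]
    rw [isUnit_iff_cast_ne hp hk]
    intro h0
    set c1 := ZMod.castHom (dvd_pow_self p hk.ne') (ZMod p) with hc1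
    set q := c1 ((p:ZMod (p^k))^j) with hq
    set e := c1 ε with he
    have h1 : (1 : ZMod p) - e * q * q = 0 := by
      rw [← h0]
      simp only [_root_.map_sub, _root_.map_mul, _root_.map_one, one_mul]
      rfl
    have h2 : (e * q) * (e * q) = e := by
      have he1 : e * (q * q) = 1 := by linear_combination -h1
      linear_combination e * he1
    exact hsq_level1 hp hodd hk ε hε hsq (e * q) h2
  set r₀ := ((Matrix.isUnit_iff_isUnit_det _).mpr hdet).unit with hr₀
  have hval : (r₀ : Matrix (Fin 2) (Fin 2) (ZMod (p^k))) = Mr :=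
    ((Matrix.isUnit_iff_isUnit_det _).mpr hdet).unit_spec
  have hcns : r₀ ∈ Cns (p^k) ε := by
    constructor <;> (rw [hval, hMr]; try simp)
  have hb : (r₀ : Matrix (Fin 2) (Fin 2) (ZMod (p^k))) 1 0 = (p:ZMod (p^k))^j := by
    rw [hval, hMr]; simp
  refine ⟨Subgroup.closure {r₀}, ?_⟩
  have hle : Subgroup.closure {r₀} ≤ cnsLevel (p^k) ε ((p:ZMod (p^k))^j) := by
    rw [Subgroup.closure_le]
    intro x hx
    rw [Set.mem_singleton_iff] at hx
    subst hx
    exact ⟨hcns, 1, by rw [hb, mul_one]⟩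
  have hset : {g : GL2 (p^k) | ∀ r ∈ Subgroup.closure {r₀}, g * r * g⁻¹ ∈ Cns (p^k) ε}
      = Tset p k ε j := by
    ext g
    simp only [Set.mem_setOf_eq]
    constructor
    · intro hall
      have h := (conj_mem_cns_iff ε r₀ hcns g).mp
        (hall r₀ (Subgroup.subset_closure (Set.mem_singleton _)))
      rw [hb] at h
      exact h
    · rintro ⟨t1, t2⟩ r hr
      obtain ⟨hrcns, t, ht⟩ := hle hr
      rw [conj_mem_cns_iff ε r hrcns g, ht]
      exact ⟨by linear_combination t * t1, by linear_combination t * t2⟩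
  rw [conjCount_eq_card, hset, card_tset hp hodd hk ε hε hsq hj]
  rw [SetLike.coe_sort_coe, card_cns hp hodd hk ε hε hsq]

lemma conjCount_classify {k : ℕ} (hp : p.Prime) (hodd : Odd p) (hk : 0 < k) (ε : ZMod (p^k))
    (hε : IsUnit ε) (hsq : ¬∃ x : ZMod (p^k), x^2 = ε) (R : Subgroup (GL2 (p^k))) :
    conjCount ((Cns (p^k) ε : Subgroup (GL2 (p^k))) : Set (GL2 (p^k))) R
        = Nat.card (GL2 (p^k)) ∨
    conjCount ((Cns (p^k) ε : Subgroup (GL2 (p^k))) : Set (GL2 (p^k))) R = 0 ∨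
    ∃ j < k, conjCount ((Cns (p^k) ε : Subgroup (GL2 (p^k))) : Set (GL2 (p^k))) R
        = Nat.card (Tset p k ε j) := by
  classical
  by_cases hne : {g : GL2 (p^k) | ∀ r ∈ R, g * r * g⁻¹ ∈ Cns (p^k) ε}.Nonempty
  swap
  · right; left
    rw [conjCount_eq_card, Set.not_nonempty_iff_eq_empty.mp hne]
    exact Nat.card_of_isEmpty
  obtain ⟨g₀, hg₀⟩ := hne
  set R' := Subgroup.map (MulAut.conj g₀).toMonoidHom R with hR'
  have hR'cns : ∀ r ∈ R', r ∈ Cns (p^k) ε := by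
    intro r hr
    rw [hR', Subgroup.mem_map] at hr
    obtain ⟨r₀, hr₀, rfl⟩ := hr
    have h1 := hg₀ r₀ hr₀
    simpa [MulAut.conj_apply] using h1
  have hcardeq : Nat.card {g : GL2 (p^k) | ∀ r ∈ R, g * r * g⁻¹ ∈ Cns (p^k) ε}
      = Nat.card {g : GL2 (p^k) | ∀ r ∈ R', g * r * g⁻¹ ∈ Cns (p^k) ε} := by
    apply Nat.card_congr
    refine ⟨fun g => ⟨g.1 * g₀⁻¹, ?_⟩, fun h => ⟨h.1 * g₀, ?_⟩, ?_, ?_⟩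
    · intro r hr
      rw [hR', Subgroup.mem_map] at hr
      obtain ⟨r₀, hr₀, rfl⟩ := hr
      have h1 := g.2 r₀ hr₀
      have heq : g.1 * g₀⁻¹ * ((MulAut.conj g₀).toMonoidHom r₀) * (g.1 * g₀⁻¹)⁻¹
          = g.1 * r₀ * g.1⁻¹ := by
        simp only [MulEquiv.coe_toMonoidHom, MulAut.conj_apply]
        group
      rw [heq]
      exact h1
    · intro r hr
      have h1 := h.2 ((MulAut.conj g₀).toMonoidHom r) (Subgroup.mem_map.mpr ⟨r, hr, rfl⟩)
      have heq : h.1 * ((MulAut.conj g₀).toMonoidHom r) * h.1⁻¹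
          = (h.1 * g₀) * r * (h.1 * g₀)⁻¹ := by
        simp only [MulEquiv.coe_toMonoidHom, MulAut.conj_apply]
        group
      rw [← heq]
      exact h1
    · intro g
      apply Subtype.ext
      show g.1 * g₀⁻¹ * g₀ = g.1
      group
    · intro h
      apply Subtype.ext
      show h.1 * g₀ * g₀⁻¹ = h.1
      group
  set P : ℕ → Prop := fun v => ∀ r ∈ R',
    ∃ t, (r : Matrix (Fin 2) (Fin 2) (ZMod (p^k))) 1 0 = (p:ZMod (p^k))^v * t with hP
  have hP0 : P 0 := fun r hr =>
    ⟨(r : Matrix (Fin 2) (Fin 2) (ZMod (p^k))) 1 0, by rw [pow_zero, one_mul]⟩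
  set j := Nat.findGreatest P k with hjdef
  have hPj : P j := Nat.findGreatest_spec (Nat.zero_le k) hP0
  have hjk : j ≤ k := Nat.findGreatest_le k
  rcases eq_or_lt_of_le hjk with hjk' | hjlt
  · left
    have hall0 : ∀ r ∈ R', (r : Matrix (Fin 2) (Fin 2) (ZMod (p^k))) 1 0 = 0 := by
      intro r hr
      obtain ⟨t, ht⟩ := hPj r hr
      rw [ht, hjk']
      have hz : (p:ZMod (p^k))^k = 0 := by rw [← Nat.cast_pow, ZMod.natCast_self]
      rw [hz, zero_mul]
    have huniv : {g : GL2 (p^k) | ∀ r ∈ R', g * r * g⁻¹ ∈ Cns (p^k) ε} = Set.univ := by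
      ext g
      simp only [Set.mem_setOf_eq, Set.mem_univ, iff_true]
      intro r hr
      rw [conj_mem_cns_iff ε r (hR'cns r hr) g, hall0 r hr]
      exact ⟨zero_mul _, zero_mul _⟩
    rw [conjCount_eq_card, hcardeq, huniv]
    exact Nat.card_congr (Equiv.Set.univ _)
  · right; right
    refine ⟨j, hjlt, ?_⟩
    have hnot : ¬ P (j+1) := by
      intro hPs
      have := Nat.le_findGreatest (by omega : j+1 ≤ k) hPs
      omega
    have hex : ∃ r₁ ∈ R', ∀ t, (r₁ : Matrix (Fin 2) (Fin 2) (ZMod (p^k))) 1 0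
        ≠ (p:ZMod (p^k))^(j+1) * t := by
      by_contra hcon
      push_neg at hcon
      exact hnot (fun r hr => hcon r hr)
    obtain ⟨r₁, hr₁, hr₁t⟩ := hex
    obtain ⟨c, hc⟩ := hPj r₁ hr₁
    have hcu : IsUnit c := by
      by_contra hcn
      obtain ⟨c', hc'⟩ := nonunit_exists_factor hp hk c hcn
      exact hr₁t c' (by rw [hc, hc', pow_succ]; ring)
    have hsetT : {g : GL2 (p^k) | ∀ r ∈ R', g * r * g⁻¹ ∈ Cns (p^k) ε} = Tset p k ε j := by
      ext g
      simp only [Set.mem_setOf_eq]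
      constructor
      · intro hall
        have h := (conj_mem_cns_iff ε r₁ (hR'cns r₁ hr₁) g).mp (hall r₁ hr₁)
        rw [hc] at h
        obtain ⟨h1, h2⟩ := h
        exact ⟨unit_cancel_ann hcu (by linear_combination h1),
               unit_cancel_ann hcu (by linear_combination h2)⟩
      · rintro ⟨t1, t2⟩ r hr
        obtain ⟨t, ht⟩ := hPj r hr
        rw [conj_mem_cns_iff ε r (hR'cns r hr) g, ht]
        exact ⟨by linear_combination t * t1, by linear_combination t * t2⟩
    rw [conjCount_eq_card, hcardeq, hsetT]

end L

theorem S_nonsplit_cartan (p k : ℕ) (hp : p.Prime) (hodd : Odd p) (hk : 0 < k)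
    (ε : ZMod (p ^ k)) (hε : IsUnit ε) (hsq : ¬∃ x : ZMod (p ^ k), x ^ 2 = ε) :
    Sset ((Cns (p ^ k) ε : Subgroup (GL2 (p ^ k))) : Set (GL2 (p ^ k))) =
      {m | m = 0 ∨ (∃ j < k, m = 2 * p ^ (2 * j)) ∨ m = p ^ (2 * k) - p ^ (2 * k - 1)} := by
  haveI : NeZero (p ^ k) := ⟨pow_ne_zero k hp.ne_zero⟩
  have hcardH : Nat.card ((Cns (p ^ k) ε : Subgroup (GL2 (p ^ k))) : Set (GL2 (p ^ k)))
      = (p ^ 2 - 1) * (p ^ (k - 1)) ^ 2 := by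
    rw [SetLike.coe_sort_coe]
    exact card_cns hp hodd hk ε hε hsq
  have hHpos : 0 < (p ^ 2 - 1) * (p ^ (k - 1)) ^ 2 := by
    have h4 : 4 ≤ p ^ 2 := by nlinarith [hp.two_le]
    have h5 := pow_pos (pow_pos hp.pos (k - 1)) 2
    exact Nat.mul_pos (by omega) h5
  ext m
  simp only [Sset, Set.mem_setOf_eq]
  constructor
  · rintro ⟨R, hR⟩
    rcases conjCount_classify hp hodd hk ε hε hsq R with h | h | ⟨j, hj, h⟩
    · right; right
      rw [hcardH] at hR
      rw [card_gl2 hp hk, arith1 hp hk] at h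
      exact Nat.eq_of_mul_eq_mul_right hHpos (hR.symm.trans h)
    · left
      rw [hcardH] at hR
      rw [h] at hR
      rcases Nat.mul_eq_zero.mp hR.symm with h0 | h0
      · exact h0
      · omega
    · right; left
      refine ⟨j, hj, ?_⟩
      rw [hcardH] at hR
      rw [card_tset hp hodd hk ε hε hsq hj] at h
      exact Nat.eq_of_mul_eq_mul_right hHpos (hR.symm.trans h)
  · rintro (rfl | ⟨j, hj, rfl⟩ | rfl)
    · exact ⟨⊤, by rw [conjCount_top hp hk ε, zero_mul]⟩
    · obtain ⟨R, hR⟩ := exists_R_two_pj hp hodd hk ε hε hsq hj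
      exact ⟨R, hR⟩
    · refine ⟨⊥, ?_⟩
      rw [conjCount_bot hp ε, card_gl2 hp hk, hcardH, arith1 hp hk]
end

section
/- Let p be an odd prime, k a positive integer, and ε a unit of ℤ/p^kℤ that is not a square. The matrices [[1, v],[0, z]], where v ranges over ℤ/p^kℤ and z ranges over the units of ℤ/p^kℤ, form a complete set of representatives for the left cosets of C_ns(p^k) in GL₂(ℤ/p^kℤ): every g ∈ GL₂(ℤ/p^kℤ) can be written as g = h · [[1, v],[0, z]] for a unique h ∈ C_ns(p^k), a unique v ∈ ℤ/p^kℤ, and a unique unit z of ℤ/p^kℤ. -/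
lemma isUnit_of_map_isUnit (p k : ℕ) (hp : p.Prime) (hk : 0 < k) (x : ZMod (p ^ k))
    (h : IsUnit (ZMod.castHom (dvd_pow_self p hk.ne') (ZMod p) x)) : IsUnit x := by
  haveI : NeZero (p ^ k) := ⟨(pow_pos hp.pos k).ne'⟩
  haveI : NeZero p := ⟨hp.ne_zero⟩
  rw [← ZMod.natCast_zmod_val x] at h ⊢
  rw [map_natCast] at h
  rw [ZMod.isUnit_iff_coprime] at h ⊢
  exact (Nat.coprime_pow_right_iff hk _ _).mpr h

lemma no_sq_mod_p (p k : ℕ) (hp : p.Prime) (hodd : Odd p) (hk : 0 < k)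
    (ε : ZMod (p ^ k)) (hε : IsUnit ε) (hsq : ¬∃ x : ZMod (p ^ k), x ^ 2 = ε) :
    ¬∃ y : ZMod p, y ^ 2 = ZMod.castHom (dvd_pow_self p hk.ne') (ZMod p) ε := by
  haveI : Fact p.Prime := ⟨hp⟩
  haveI : NeZero (p ^ k) := ⟨(pow_pos hp.pos k).ne'⟩
  rintro ⟨y, hy⟩
  set f := ZMod.unitsMap (dvd_pow_self p hk.ne') with hf
  have hyu : IsUnit y := by
    have h2 := hε.map (ZMod.castHom (dvd_pow_self p hk.ne') (ZMod p))
    rw [← hy] at h2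
    exact (isUnit_pow_iff two_ne_zero).mp h2
  obtain ⟨w, hw⟩ := ZMod.unitsMap_surjective (dvd_pow_self p hk.ne') hyu.unit
  set u := hε.unit * (w ^ 2)⁻¹ with hu_def
  have hu : u ∈ f.ker := by
    rw [MonoidHom.mem_ker]
    have h1 : f hε.unit = hyu.unit ^ 2 := by
      ext
      simp [f, ZMod.unitsMap_def, ← hy]
    rw [hu_def, map_mul, map_inv, map_pow, hw, h1]
    group
  have hcard : Nat.card f.ker = p ^ (k - 1) := by
    have h2 : Nat.card (ZMod (p ^ k))ˣ = Nat.card ((ZMod (p ^ k))ˣ ⧸ f.ker) * Nat.card f.ker :=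
      Subgroup.card_eq_card_quotient_mul_card_subgroup f.ker
    have h3 : Nat.card ((ZMod (p ^ k))ˣ ⧸ f.ker) = Nat.card (ZMod p)ˣ :=
      Nat.card_congr (QuotientGroup.quotientKerEquivOfSurjective f
        (ZMod.unitsMap_surjective _)).toEquiv
    have h4 : Nat.card (ZMod (p ^ k))ˣ = p ^ (k - 1) * (p - 1) := by
      rw [Nat.card_eq_fintype_card, ZMod.card_units_eq_totient, Nat.totient_prime_pow hp hk]
    have h5 : Nat.card (ZMod p)ˣ = p - 1 := by
      rw [Nat.card_eq_fintype_card, ZMod.card_units_eq_totient, Nat.totient_prime hp]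
    rw [h4, h3, h5] at h2
    have hp1 : 0 < p - 1 := by have := hp.two_le; omega
    exact (Nat.eq_of_mul_eq_mul_left hp1 (by linarith [h2])).symm
  have hoddc : Odd (Nat.card f.ker) := hcard ▸ hodd.pow
  obtain ⟨m, hm⟩ := hoddc
  have hu_pow : u ^ Nat.card f.ker = 1 := by
    have h6 : (⟨u, hu⟩ : f.ker) ^ Nat.card f.ker = 1 := pow_card_eq_one'
    exact Subtype.ext_iff.mp h6
  have huu : u ^ (m + 1) * u ^ (m + 1) = u := by
    rw [← pow_add]
    have h7 : m + 1 + (m + 1) = Nat.card f.ker + 1 := by omega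
    rw [h7, pow_succ, hu_pow, one_mul]
  have hsqu : (w * u ^ (m + 1)) ^ 2 = hε.unit := by
    have e1 : (w * u ^ (m + 1)) ^ 2 = w ^ 2 * (u ^ (m + 1) * u ^ (m + 1)) := by
      rw [mul_pow, sq (u ^ (m + 1))]
    rw [e1, huu, hu_def, mul_comm hε.unit, mul_inv_cancel_left]
  refine hsq ⟨((w * u ^ (m + 1) : (ZMod (p ^ k))ˣ) : ZMod (p ^ k)), ?_⟩
  rw [← Units.val_pow_eq_pow_val, hsqu, IsUnit.unit_spec]


open Matrix

theorem coset_representatives_nonsplit_cartan (p k : ℕ) (hp : p.Prime) (hodd : Odd p)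
    (hk : 0 < k) (ε : ZMod (p ^ k)) (hε : IsUnit ε)
    (hsq : ¬∃ x : ZMod (p ^ k), x ^ 2 = ε) (g : GL2 (p ^ k)) :
    ∃! x : (Cns (p ^ k) ε) × ZMod (p ^ k) × (ZMod (p ^ k))ˣ,
      (g : Matrix (Fin 2) (Fin 2) (ZMod (p ^ k))) =
        ((x.1 : GL2 (p ^ k)) : Matrix (Fin 2) (Fin 2) (ZMod (p ^ k))) *
          !![1, x.2.1; 0, (x.2.2 : ZMod (p ^ k))] := by

  haveI : Fact p.Prime := ⟨hp⟩
  haveI : NeZero (p ^ k) := ⟨(pow_pos hp.pos k).ne'⟩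
  set f : ZMod (p ^ k) →+* ZMod p := ZMod.castHom (dvd_pow_self p hk.ne') (ZMod p) with hf
  set A := (g : Matrix (Fin 2) (Fin 2) (ZMod (p ^ k))) with hA
  set a := A 0 0 with ha
  set b := A 1 0 with hb
  set c := A 0 1 with hc
  set d := A 1 1 with hd
  have hdet : IsUnit (a * d - c * b) := by
    have h1 : IsUnit A.det := (Matrix.isUnit_iff_isUnit_det A).mp g.isUnit
    rwa [Matrix.det_fin_two] at h1
  have hD : IsUnit (a ^ 2 - ε * b ^ 2) := by
    apply isUnit_of_map_isUnit p k hp hk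
    have hmap : f (a ^ 2 - ε * b ^ 2) = f a ^ 2 - f ε * f b ^ 2 := by
      rw [map_sub, _root_.map_mul, map_pow, map_pow]
    have hne : f a ^ 2 - f ε * f b ^ 2 ≠ 0 := by
      intro h0
      rcases eq_or_ne (f b) 0 with hb0 | hb0
      · have ha0 : f a = 0 := by
          have h2 : f a ^ 2 = 0 := by rw [hb0] at h0; simpa using h0
          exact pow_eq_zero_iff two_ne_zero |>.mp h2
        have hdet0 : f (a * d - c * b) = 0 := by
          rw [map_sub, _root_.map_mul, _root_.map_mul, ha0, hb0, zero_mul, mul_zero, sub_zero]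
        have h3 := hdet.map f
        rw [hdet0] at h3
        exact not_isUnit_zero h3
      · refine no_sq_mod_p p k hp hodd hk ε hε hsq ⟨f a * (f b)⁻¹, ?_⟩
        show (f a * (f b)⁻¹) ^ 2 = f ε
        field_simp
        linear_combination h0
    show IsUnit (f (a ^ 2 - ε * b ^ 2))
    rw [hmap]
    exact isUnit_iff_ne_zero.mpr hne
  set D := a ^ 2 - ε * b ^ 2 with hDdef
  set Di := Ring.inverse D with hDidef
  have hDDi : D * Di = 1 := Ring.mul_inverse_cancel D hD
  set v := Di * (a * c - ε * b * d) with hvdef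
  set z := Di * (a * d - c * b) with hzdef
  have hzu : IsUnit z := (isUnit_ringInverse.mpr hD).mul hdet
  have hveq : a * v + ε * b * z = c := by
    have h1 : a * v + ε * b * z = (D * Di) * c := by rw [hvdef, hzdef, hDdef]; ring
    rw [h1, hDDi, one_mul]
  have hdeq : b * v + a * z = d := by
    have h1 : b * v + a * z = (D * Di) * d := by rw [hvdef, hzdef, hDdef]; ring
    rw [h1, hDDi, one_mul]
  set M : Matrix (Fin 2) (Fin 2) (ZMod (p ^ k)) := !![a, ε * b; b, a] with hM
  have hMu : IsUnit M := by
    rw [Matrix.isUnit_iff_isUnit_det]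
    have h1 : M.det = D := by rw [hM, Matrix.det_fin_two_of, hDdef]; ring
    rw [h1]; exact hD
  have hcoe : ((hMu.unit : GL2 (p ^ k)) : Matrix (Fin 2) (Fin 2) (ZMod (p ^ k))) = M :=
    hMu.unit_spec
  have hmem : hMu.unit ∈ Cns (p ^ k) ε := by
    show _ ∧ _
    rw [hcoe, hM]
    constructor <;> simp
  have hprod : M * !![1, v; 0, z] = !![a, a * v + ε * b * z; b, b * v + a * z] := by
    rw [hM]
    ext i j
    fin_cases i <;> fin_cases j <;> simp [Matrix.mul_apply, Fin.sum_univ_two]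
  refine ⟨(⟨hMu.unit, hmem⟩, v, hzu.unit), ?_, ?_⟩
  · show A = _ * _
    rw [hcoe, hzu.unit_spec, hprod, hveq, hdeq]
    exact Matrix.eta_fin_two A
  · rintro ⟨⟨h', hmem'⟩, v', z'⟩ heq
    obtain ⟨hm1, hm2⟩ := hmem'
    simp only at heq
    have E : ∀ i j, A i j =
        ((h' : Matrix (Fin 2) (Fin 2) (ZMod (p ^ k))) * !![1, v'; 0, (z' : ZMod (p ^ k))]) i j :=
      fun i j => by rw [← heq]
    have e00 := E 0 0
    have e10 := E 1 0
    have e01 := E 0 1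
    have e11 := E 1 1
    simp only [Matrix.mul_apply, Fin.sum_univ_two, Matrix.cons_val', Matrix.cons_val_zero,
      Matrix.cons_val_one, Matrix.head_cons, Matrix.head_fin_const, Matrix.empty_val',
      Matrix.cons_val_fin_one, Matrix.of_apply, mul_one, mul_zero, add_zero, zero_mul,
      zero_add] at e00 e10 e01 e11
    rw [hm2, ← e00, ← e10] at e01
    rw [hm1, ← e00, ← e10] at e11
    rw [← ha, ← hb, ← hc] at e01
    rw [← ha, ← hb, ← hd] at e11
    -- e01 : c = a * v' + ε * b * z'.val ; e11 : d = b * v' + a * z'.val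
    have h1 : a * (v - v') + ε * b * (z - (z' : ZMod (p ^ k))) = 0 := by
      linear_combination hveq + e01
    have h2 : b * (v - v') + a * (z - (z' : ZMod (p ^ k))) = 0 := by
      linear_combination hdeq + e11
    have hv : v = v' := by
      have h3 : D * (v - v') = D * 0 := by
        rw [mul_zero, hDdef]; linear_combination a * h1 - ε * b * h2
      have h4 := hD.mul_left_cancel h3
      linear_combination h4
    have hzz : z = (z' : ZMod (p ^ k)) := by
      have h3 : D * (z - (z' : ZMod (p ^ k))) = D * 0 := by
        rw [mul_zero, hDdef]; linear_combination a * h2 - b * h1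
      have h4 := hD.mul_left_cancel h3
      linear_combination h4
    have hents : (h' : Matrix (Fin 2) (Fin 2) (ZMod (p ^ k))) = M := by
      rw [Matrix.eta_fin_two ((h' : GL2 (p ^ k)) : Matrix (Fin 2) (Fin 2) (ZMod (p ^ k))),
        hm1, hm2, ← e00, ← e10, hM]
    refine Prod.ext ?_ (Prod.ext ?_ ?_)
    · exact Subtype.ext (Units.ext (by rw [hents, hcoe]))
    · exact hv.symm
    · exact Units.ext (by rw [hzu.unit_spec, ← hzz])
end
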